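/- arXiv:1507.07011 — 9 statements merged into one kernel-verified Lean document; each statement's English description precedes it below -/
import Mathlib

section
/- Let m ≥ 1 and let v : ℝ^m → ℝ be continuously differentiable on an open set containing the box [0,1]^m, with v(0) = 0, and suppose that for every coordinate j the partial derivative ∂v/∂x_j is componentwise nonincreasing on [0,1]^m (i.e., if x ≤ x' componentwise with x, x' ∈ [0,1]^m, then ∂v/∂x_j(x') ≤ ∂v/∂x_j(x)). Then v is subadditive on [0,1]^m: for all x, y ∈ [0,1]^m with x + y ∈ [0,1]^m, v(x + y) ≤ v(x) + v(y). -/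
/-!
For `t ∈ [0,1]` put `g t = v (y + t • x) - v (t • x)`. Its derivative is
`Dv(y + t • x) x - Dv(t • x) x`, a nonnegative combination (weights `x j ≥ 0`) of differences of
partial derivatives at two comparable points `t • x ≤ y + t • x`, hence `≤ 0`. So
`g 1 ≤ g 0`, i.e. `v (x + y) - v x ≤ v y - v 0 = v y`.
-/

open Set

lemma ContinuousLinearMap.apply_le_apply_of_single_le {ι : Type*} [Fintype ι] [DecidableEq ι]
    {L L' : (ι → ℝ) →L[ℝ] ℝ} (hLL' : ∀ j, L (Pi.single j 1) ≤ L' (Pi.single j 1))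
    {x : ι → ℝ} (hx : 0 ≤ x) : L x ≤ L' x := by
  rw [pi_eq_sum_univ' x, map_sum, map_sum]
  exact Finset.sum_le_sum fun j _ => by
    simpa only [map_smul, smul_eq_mul] using mul_le_mul_of_nonneg_left (hLL' j) (hx j)

section LineRestriction

variable {E : Type*} [NormedAddCommGroup E] [NormedSpace ℝ E] {v : E → ℝ}

lemma DifferentiableAt.hasDerivAt_comp_add_smul {c x : E} {t : ℝ}
    (hv : DifferentiableAt ℝ v (c + t • x)) :
    HasDerivAt (fun s : ℝ => v (c + s • x)) (fderiv ℝ v (c + t • x) x) t := by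
  have hline : HasDerivAt (fun s : ℝ => c + s • x) x t := by
    simpa using ((hasDerivAt_id t).smul_const x).const_add c
  exact hv.hasFDerivAt.comp_hasDerivAt t hline

lemma sub_le_sub_of_fderiv_add_smul_le {x y : E}
    (hdiff : ∀ t ∈ Icc (0 : ℝ) 1,
      DifferentiableAt ℝ v (t • x) ∧ DifferentiableAt ℝ v (y + t • x))
    (hle : ∀ t ∈ Icc (0 : ℝ) 1, fderiv ℝ v (y + t • x) x ≤ fderiv ℝ v (t • x) x) :
    v (x + y) - v x ≤ v y - v 0 := by
  have hderiv : ∀ t ∈ Icc (0 : ℝ) 1, HasDerivAt (fun s : ℝ => v (y + s • x) - v (s • x))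
      (fderiv ℝ v (y + t • x) x - fderiv ℝ v (t • x) x) t := fun t ht => by
    have h₀ := (hdiff t ht).1
    rw [← zero_add (t • x)] at h₀
    have h₀' : HasDerivAt (fun s : ℝ => v (s • x)) (fderiv ℝ v (t • x) x) t := by
      simpa only [zero_add] using h₀.hasDerivAt_comp_add_smul
    exact (hdiff t ht).2.hasDerivAt_comp_add_smul.sub h₀'
  have hanti : AntitoneOn (fun s : ℝ => v (y + s • x) - v (s • x)) (Icc 0 1) := by
    refine antitoneOn_of_hasDerivWithinAt_nonpos (convex_Icc 0 1)
      (fun t ht => (hderiv t ht).continuousAt.continuousWithinAt)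
      (fun t ht => (hderiv t (interior_subset ht)).hasDerivWithinAt)
      (fun t ht => sub_nonpos.2 (hle t (interior_subset ht)))
  have h := hanti (left_mem_Icc.2 zero_le_one) (right_mem_Icc.2 zero_le_one) zero_le_one
  simp only [one_smul, zero_smul, add_zero] at h
  rwa [add_comm y x] at h

end LineRestriction

theorem stmt_0_general (m : ℕ) (v : (Fin m → ℝ) → ℝ)
    (U : Set (Fin m → ℝ)) (hU : IsOpen U)
    (hboxU : Set.Icc (0 : Fin m → ℝ) 1 ⊆ U)
    (hC1 : ContDiffOn ℝ 1 v U)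
    (hv0 : v 0 = 0)
    (hpartial_mono : ∀ (j : Fin m) (x x' : Fin m → ℝ),
      x ∈ Set.Icc (0 : Fin m → ℝ) 1 → x' ∈ Set.Icc (0 : Fin m → ℝ) 1 →
      x ≤ x' → fderiv ℝ v x' (Pi.single j 1) ≤ fderiv ℝ v x (Pi.single j 1)) :
    ∀ x y : Fin m → ℝ, x ∈ Set.Icc (0 : Fin m → ℝ) 1 →
      y ∈ Set.Icc (0 : Fin m → ℝ) 1 → x + y ∈ Set.Icc (0 : Fin m → ℝ) 1 →
      v (x + y) ≤ v x + v y := by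
  intro x y hx hy hxy
  have hbox : Convex ℝ (Icc (0 : Fin m → ℝ) 1) := convex_Icc 0 1
  have hsmul : ∀ t ∈ Icc (0 : ℝ) 1, t • x ∈ Icc (0 : Fin m → ℝ) 1 := fun t ht =>
    hbox.smul_mem_of_zero_mem (left_mem_Icc.2 zero_le_one) hx ht
  have hadd : ∀ t ∈ Icc (0 : ℝ) 1, y + t • x ∈ Icc (0 : Fin m → ℝ) 1 := fun t ht =>
    hbox.add_smul_mem hy (add_comm x y ▸ hxy) ht
  have hdiff : ∀ z ∈ Icc (0 : Fin m → ℝ) 1, DifferentiableAt ℝ v z := fun z hz =>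
    (hC1.differentiableOn one_ne_zero).differentiableAt (hU.mem_nhds (hboxU hz))
  have h := sub_le_sub_of_fderiv_add_smul_le (x := x) (y := y)
    (fun t ht => ⟨hdiff _ (hsmul t ht), hdiff _ (hadd t ht)⟩)
    (fun t ht => ContinuousLinearMap.apply_le_apply_of_single_le
      (fun j => hpartial_mono j _ _ (hsmul t ht) (hadd t ht) (le_add_of_nonneg_left hy.1)) hx.1)
  linarith

/-- If `v` is continuously differentiable on an open set containing the
box `[0,1]^m`, normalized (`v 0 = 0`), and every partial derivative `∂v/∂x_j` is
componentwise nonincreasing on the box, then `v` is subadditive on the box. -/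
theorem stmt_0 (m : ℕ) (hm : 1 ≤ m) (v : (Fin m → ℝ) → ℝ)
    (U : Set (Fin m → ℝ)) (hU : IsOpen U)
    (hboxU : Set.Icc (0 : Fin m → ℝ) 1 ⊆ U)
    (hC1 : ContDiffOn ℝ 1 v U)
    (hv0 : v 0 = 0)
    (hpartial_mono : ∀ (j : Fin m) (x x' : Fin m → ℝ),
      x ∈ Set.Icc (0 : Fin m → ℝ) 1 → x' ∈ Set.Icc (0 : Fin m → ℝ) 1 →
      x ≤ x' → fderiv ℝ v x' (Pi.single j 1) ≤ fderiv ℝ v x (Pi.single j 1)) :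
    ∀ x y : Fin m → ℝ, x ∈ Set.Icc (0 : Fin m → ℝ) 1 →
      y ∈ Set.Icc (0 : Fin m → ℝ) 1 → x + y ∈ Set.Icc (0 : Fin m → ℝ) 1 →
      v (x + y) ≤ v x + v y :=
  stmt_0_general m v U hU hboxU hC1 hv0 hpartial_mono
end

section
/- For all real numbers o, a, p with 0 ≤ o ≤ 1, a > 0 and p > 0, it holds that o·a/(o·a + p) + o·p/(o·p + a) ≥ o. -/
/-- the key swapping inequality for the proportional allocation
mechanism: for `0 ≤ o ≤ 1`, `a > 0`, `p > 0`, the two swapped proportional shares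
together cover the fraction `o`. -/
theorem stmt_1 (o a p : ℝ) (ho0 : 0 ≤ o) (ho1 : o ≤ 1) (ha : 0 < a) (hp : 0 < p) :
    o * a / (o * a + p) + o * p / (o * p + a) ≥ o := by
  have hoa : o * a ≤ a := mul_le_of_le_one_left ha.le ho1
  have hop : o * p ≤ p := mul_le_of_le_one_left hp.le ho1
  calc o = o * a / (a + p) + o * p / (p + a) := by field_simp; ring
    -- since `o ≤ 1`, both denominators only shrink
    _ ≤ o * a / (o * a + p) + o * p / (o * p + a) := by gcongr
end

section
/- Consider the proportional allocation mechanism with n agents and m divisible resources. Fix an agent i with a monotone, normalized, subadditive valuation v_i : [0,1]^m → ℝ≥0, fix nonnegative bids b_k ∈ ℝ≥0^m for all agents k ≠ i, and set p_{ij} = Σ_{k≠i} b_{kj}; assume p_{ij} > 0 for every resource j. Fix any vector o_i ∈ [0,1]^m. Then the deviating bid a_i defined by a_{ij} = o_{ij}·p_{ij} satisfies u_i(a_i, b_{-i}) = v_i(x_i(a_i, b_{-i})) − Σ_j a_{ij} ≥ (1/2)·v_i(o_i) − Σ_j o_{ij}·p_{ij}. -/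
/-! Bidding `o j * p j` against opponents' total `p j` wins the share `x j = o j / (o j + 1)`,
and `x ≤ o ≤ 2 • x` on `[0,1]`. Splitting `o = x + (o - x)` with `o - x ≤ x`, subadditivity and
monotonicity give `v o ≤ 2 * v x`. -/

theorem le_two_mul_of_le_of_le_two_mul {ι : Type*} (v : (ι → ℝ) → ℝ)
    (hmono : ∀ x x' : ι → ℝ, (∀ j, 0 ≤ x j ∧ x j ≤ 1) → (∀ j, 0 ≤ x' j ∧ x' j ≤ 1) →
      (∀ j, x j ≤ x' j) → v x ≤ v x')
    (hsub : ∀ x y : ι → ℝ, (∀ j, 0 ≤ x j ∧ x j ≤ 1) → (∀ j, 0 ≤ y j ∧ y j ≤ 1) →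
      (∀ j, 0 ≤ x j + y j ∧ x j + y j ≤ 1) → v (x + y) ≤ v x + v y)
    {x o : ι → ℝ} (ho : ∀ j, 0 ≤ o j ∧ o j ≤ 1) (hx_nonneg : ∀ j, 0 ≤ x j)
    (hxo : ∀ j, x j ≤ o j) (hox : ∀ j, o j ≤ 2 * x j) :
    v o ≤ 2 * v x := by
  have hx : ∀ j, 0 ≤ x j ∧ x j ≤ 1 := fun j => ⟨hx_nonneg j, (hxo j).trans (ho j).2⟩
  have hrest : ∀ j, 0 ≤ (o - x) j ∧ (o - x) j ≤ 1 := fun j => by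
    simp only [Pi.sub_apply]
    constructor <;> linarith [hxo j, hox j, hx j]
  have hsplit : v o ≤ v x + v (o - x) := by
    simpa using hsub x (o - x) hx hrest (by simpa using ho)
  have hrest_le : v (o - x) ≤ v x :=
    hmono _ _ hrest hx fun j => by simp only [Pi.sub_apply]; linarith [hox j]
  linarith

theorem mul_div_mul_add_self {o p : ℝ} (hp : p ≠ 0) : o * p / (o * p + p) = o / (o + 1) := by
  rw [show o * p + p = (o + 1) * p by ring, mul_div_mul_right _ _ hp]

section
variable {o : ℝ}

theorem div_add_one_nonneg (ho : 0 ≤ o) : 0 ≤ o / (o + 1) := by positivity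

theorem div_add_one_le_self (ho : 0 ≤ o) : o / (o + 1) ≤ o :=
  div_le_self ho (by linarith)

theorem le_two_mul_div_add_one (ho₀ : 0 ≤ o) (ho₁ : o ≤ 1) : o ≤ 2 * (o / (o + 1)) := by
  rw [mul_div_assoc', le_div_iff₀ (by linarith)]
  nlinarith

end

theorem stmt_4_general (m : ℕ)
    (v : (Fin m → ℝ) → ℝ)
    (hmono : ∀ x x' : Fin m → ℝ, (∀ j, 0 ≤ x j ∧ x j ≤ 1) → (∀ j, 0 ≤ x' j ∧ x' j ≤ 1) →
      (∀ j, x j ≤ x' j) → v x ≤ v x')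
    (hsub : ∀ x y : Fin m → ℝ, (∀ j, 0 ≤ x j ∧ x j ≤ 1) → (∀ j, 0 ≤ y j ∧ y j ≤ 1) →
      (∀ j, 0 ≤ x j + y j ∧ x j + y j ≤ 1) → v (x + y) ≤ v x + v y)
    (p : Fin m → ℝ)
    (hppos : ∀ j, 0 < p j)
    (o : Fin m → ℝ) (ho : ∀ j, 0 ≤ o j ∧ o j ≤ 1) :
    v (fun j => o j * p j / (o j * p j + p j)) - ∑ j, o j * p j
      ≥ (1 / 2) * v o - ∑ j, o j * p j := by
  have hshare : (fun j => o j * p j / (o j * p j + p j)) = fun j => o j / (o j + 1) :=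
    funext fun j => mul_div_mul_add_self (hppos j).ne'
  have hvo : v o ≤ 2 * v fun j => o j / (o j + 1) :=
    le_two_mul_of_le_of_le_two_mul v hmono hsub ho (fun j => div_add_one_nonneg (ho j).1)
      (fun j => div_add_one_le_self (ho j).1) fun j => le_two_mul_div_add_one (ho j).1 (ho j).2
  rw [hshare]
  linarith

/-- in the proportional allocation mechanism, if agent `i` has a
monotone, normalized, subadditive valuation, the opponents' bid sums `p j` are
positive, and `o ∈ [0,1]^m`, then the deviating bid `a j = o j * p j` guarantees
utility at least `(1/2)·v(o) − Σ_j o j · p j`. -/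
theorem stmt_4 (n m : ℕ) (i : Fin n)
    (v : (Fin m → ℝ) → ℝ)
    (hv0 : v 0 = 0)
    (hvnn : ∀ x : Fin m → ℝ, (∀ j, 0 ≤ x j ∧ x j ≤ 1) → 0 ≤ v x)
    (hmono : ∀ x x' : Fin m → ℝ, (∀ j, 0 ≤ x j ∧ x j ≤ 1) → (∀ j, 0 ≤ x' j ∧ x' j ≤ 1) →
      (∀ j, x j ≤ x' j) → v x ≤ v x')
    (hsub : ∀ x y : Fin m → ℝ, (∀ j, 0 ≤ x j ∧ x j ≤ 1) → (∀ j, 0 ≤ y j ∧ y j ≤ 1) →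
      (∀ j, 0 ≤ x j + y j ∧ x j + y j ≤ 1) → v (x + y) ≤ v x + v y)
    (b : Fin n → Fin m → ℝ) (hb : ∀ k j, 0 ≤ b k j)
    (p : Fin m → ℝ) (hp : ∀ j, p j = ∑ k ∈ Finset.univ.erase i, b k j)
    (hppos : ∀ j, 0 < p j)
    (o : Fin m → ℝ) (ho : ∀ j, 0 ≤ o j ∧ o j ≤ 1) :
    v (fun j => o j * p j / (o j * p j + p j)) - ∑ j, o j * p j
      ≥ (1 / 2) * v o - ∑ j, o j * p j :=
  stmt_4_general m v hmono hsub p hppos o ho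
end

section
/- Consider the proportional allocation mechanism with n agents and m divisible resources, where every agent i has a monotone, normalized, subadditive valuation v_i : [0,1]^m → ℝ≥0. Let b be a pure Nash equilibrium bid profile (all bids nonnegative) such that for every agent i and every resource j, Σ_{k≠i} b_{kj} > 0. Then for every feasible allocation o (o_{ij} ≥ 0 and Σ_{i} o_{ij} ≤ 1 for each j), the social welfare at equilibrium satisfies Σ_i v_i(x_i(b)) ≥ (1/2)·Σ_i v_i(o_i). In other words, the pure Price of Anarchy of the proportional allocation mechanism with subadditive agents is at most 2. -/
/-- The fractional allocation of the proportional allocation mechanism: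
agent `i` receives the fraction `b i j / Σ_k b k j` of resource `j`. -/
noncomputable def propAlloc {n m : ℕ} (b : Fin n → Fin m → ℝ) (i : Fin n) : Fin m → ℝ :=
  fun j => b i j / ∑ k, b k j

/-- Agent `i`'s quasilinear utility in the proportional allocation mechanism. -/
noncomputable def propUtility {n m : ℕ} (v : (Fin m → ℝ) → ℝ)
    (b : Fin n → Fin m → ℝ) (i : Fin n) : ℝ :=
  v (propAlloc b i) - ∑ j, b i j

/-!
Each agent `i` can deviate to the bid `o i j * B j`, where `B j = Σ_k b k j` is the current
price of resource `j`. Since the other agents bid at most `B j`, this buys at least the fraction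
`o i j / 2` of every resource, which by monotonicity and subadditivity is worth at least
`v i (o i) / 2`. The equilibrium condition then gives
`v i (x i) - Σ_j b i j ≥ v i (o i) / 2 - Σ_j o i j * B j`. Summed over the agents, the payments
on the left total `Σ_j B j`, and by feasibility of `o` the costs on the right total at most that.
-/

lemma half_le_mul_div_mul_add {o B c : ℝ} (ho : 0 ≤ o) (ho1 : o ≤ 1) (hc : 0 < c)
    (hcB : c ≤ B) : o / 2 ≤ o * B / (o * B + c) := by
  have hden : 0 < o * B + c := by nlinarith
  rw [div_le_div_iff₀ two_pos hden]
  nlinarith [mul_le_mul_of_nonneg_left ho1 (by linarith : (0 : ℝ) ≤ B)]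

lemma le_two_mul_apply_half {ι : Type*} (v : (ι → ℝ) → ℝ)
    (hsub : ∀ x y : ι → ℝ, (∀ j, 0 ≤ x j ∧ x j ≤ 1) → (∀ j, 0 ≤ y j ∧ y j ≤ 1) →
      (∀ j, 0 ≤ x j + y j ∧ x j + y j ≤ 1) → v (x + y) ≤ v x + v y)
    {x : ι → ℝ} (hx : ∀ j, 0 ≤ x j ∧ x j ≤ 1) : v x ≤ 2 * v (fun j => x j / 2) := by
  have hhalf : ∀ j, 0 ≤ x j / 2 ∧ x j / 2 ≤ 1 := fun j => by
    constructor <;> linarith [hx j]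
  have hsplit : x = (fun j => x j / 2) + (fun j => x j / 2) := by
    funext j
    simp only [Pi.add_apply]
    ring
  calc v x = v ((fun j => x j / 2) + (fun j => x j / 2)) := congrArg v hsplit
    _ ≤ v (fun j => x j / 2) + v (fun j => x j / 2) :=
        hsub _ _ hhalf hhalf fun j => by simpa [← hsplit] using hx j
    _ = 2 * v (fun j => x j / 2) := by ring

lemma propAlloc_update_self {n m : ℕ} (b : Fin n → Fin m → ℝ) (i : Fin n) (b' : Fin m → ℝ)
    (j : Fin m) :
    propAlloc (Function.update b i b') i j = b' j / (b' j + ∑ k ∈ Finset.univ.erase i, b k j) := by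
  unfold propAlloc
  rw [← Finset.add_sum_erase _ _ (Finset.mem_univ i), Function.update_self]
  congr 2
  exact Finset.sum_congr rfl fun k hk => by rw [Function.update_of_ne (Finset.ne_of_mem_erase hk)]

section Deviation

variable {n m : ℕ} (b : Fin n → Fin m → ℝ) (hb : ∀ i j, 0 ≤ b i j)
  (i : Fin n) (hpos : ∀ j, 0 < ∑ k ∈ Finset.univ.erase i, b k j)
  (oᵢ : Fin m → ℝ) (hoᵢ : ∀ j, 0 ≤ oᵢ j ∧ oᵢ j ≤ 1)
include hb hpos hoᵢ

lemma half_le_propAlloc_update_mul_sum (j : Fin m) :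
    oᵢ j / 2 ≤ propAlloc (Function.update b i fun j => oᵢ j * ∑ k, b k j) i j := by
  rw [propAlloc_update_self]
  refine half_le_mul_div_mul_add (hoᵢ j).1 (hoᵢ j).2 (hpos j) ?_
  rw [← Finset.add_sum_erase _ _ (Finset.mem_univ i)]
  linarith [hb i j]

lemma half_apply_le_apply_propAlloc_update_mul_sum (v : (Fin m → ℝ) → ℝ)
    (hmono : ∀ x x' : Fin m → ℝ, (∀ j, 0 ≤ x j ∧ x j ≤ 1) →
      (∀ j, 0 ≤ x' j ∧ x' j ≤ 1) → (∀ j, x j ≤ x' j) → v x ≤ v x')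
    (hsub : ∀ x y : Fin m → ℝ, (∀ j, 0 ≤ x j ∧ x j ≤ 1) →
      (∀ j, 0 ≤ y j ∧ y j ≤ 1) → (∀ j, 0 ≤ x j + y j ∧ x j + y j ≤ 1) →
      v (x + y) ≤ v x + v y) :
    v oᵢ / 2 ≤ v (propAlloc (Function.update b i fun j => oᵢ j * ∑ k, b k j) i) := by
  set x := propAlloc (Function.update b i fun j => oᵢ j * ∑ k, b k j) i with hx
  have hbound : ∀ j, 0 ≤ x j ∧ x j ≤ 1 := fun j => by
    rw [hx, propAlloc_update_self]
    have hdev : 0 ≤ oᵢ j * ∑ k, b k j :=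
      mul_nonneg (hoᵢ j).1 (Finset.sum_nonneg fun k _ => hb k j)
    have hden : 0 < oᵢ j * ∑ k, b k j + ∑ k ∈ Finset.univ.erase i, b k j := by linarith [hpos j]
    exact ⟨div_nonneg hdev hden.le, div_le_one_of_le₀ (by linarith [hpos j]) hden.le⟩
  have hhalf : ∀ j, 0 ≤ oᵢ j / 2 ∧ oᵢ j / 2 ≤ 1 := fun j => by
    constructor <;> linarith [hoᵢ j]
  linarith [le_two_mul_apply_half v hsub hoᵢ,
    hmono _ _ hhalf hbound (half_le_propAlloc_update_mul_sum b hb i hpos oᵢ hoᵢ)]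

end Deviation

lemma sum_sum_mul_sum_le_sum_sum {n m : ℕ} (b o : Fin n → Fin m → ℝ) (hb : ∀ i j, 0 ≤ b i j)
    (hfeas : ∀ j, ∑ i, o i j ≤ 1) :
    ∑ i, ∑ j, o i j * ∑ k, b k j ≤ ∑ i, ∑ j, b i j := by
  rw [Finset.sum_comm, Finset.sum_comm (f := b)]
  refine Finset.sum_le_sum fun j _ => ?_
  rw [← Finset.sum_mul]
  exact mul_le_of_le_one_left (Finset.sum_nonneg fun k _ => hb k j) (hfeas j)

theorem stmt_5_general (n m : ℕ) (v : Fin n → (Fin m → ℝ) → ℝ)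
    (hmono : ∀ i (x x' : Fin m → ℝ), (∀ j, 0 ≤ x j ∧ x j ≤ 1) →
      (∀ j, 0 ≤ x' j ∧ x' j ≤ 1) → (∀ j, x j ≤ x' j) → v i x ≤ v i x')
    (hsub : ∀ i (x y : Fin m → ℝ), (∀ j, 0 ≤ x j ∧ x j ≤ 1) →
      (∀ j, 0 ≤ y j ∧ y j ≤ 1) → (∀ j, 0 ≤ x j + y j ∧ x j + y j ≤ 1) →
      v i (x + y) ≤ v i x + v i y)
    (b : Fin n → Fin m → ℝ) (hb : ∀ i j, 0 ≤ b i j)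
    (hpos : ∀ i j, 0 < ∑ k ∈ Finset.univ.erase i, b k j)
    (hNE : ∀ i (b' : Fin m → ℝ), (∀ j, 0 ≤ b' j) →
      propUtility (v i) (Function.update b i b') i ≤ propUtility (v i) b i)
    (o : Fin n → Fin m → ℝ) (ho : ∀ i j, 0 ≤ o i j) (hfeas : ∀ j, ∑ i, o i j ≤ 1) :
    ∑ i, v i (propAlloc b i) ≥ (1 / 2) * ∑ i, v i (o i) := by
  have hoᵢ : ∀ i j, 0 ≤ o i j ∧ o i j ≤ 1 := fun i j =>
    ⟨ho i j, (Finset.single_le_sum (fun k _ => ho k j) (Finset.mem_univ i)).trans (hfeas j)⟩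
  have hagent : ∀ i, v i (o i) / 2 - ∑ j, o i j * ∑ k, b k j ≤
      v i (propAlloc b i) - ∑ j, b i j := fun i => by
    have hdev := hNE i (fun j => o i j * ∑ k, b k j)
      fun j => mul_nonneg (ho i j) (Finset.sum_nonneg fun k _ => hb k j)
    unfold propUtility at hdev
    rw [Function.update_self] at hdev
    linarith [half_apply_le_apply_propAlloc_update_mul_sum b hb i (hpos i) (o i) (hoᵢ i) (v i)
      (hmono i) (hsub i)]
  have hsum := Finset.sum_le_sum fun i (_ : i ∈ Finset.univ) => hagent i
  simp only [Finset.sum_sub_distrib, ← Finset.sum_div] at hsum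
  linarith [sum_sum_mul_sum_le_sum_sum b o hb hfeas]

/-- the pure Price of Anarchy of the proportional allocation mechanism
with monotone, normalized, subadditive valuations is at most `2`: at any pure Nash
equilibrium `b` (with positive opponents' bid sums), the social welfare is at least
half of the welfare of any feasible allocation `o`. -/
theorem stmt_5 (n m : ℕ) (v : Fin n → (Fin m → ℝ) → ℝ)
    (hv0 : ∀ i, v i 0 = 0)
    (hvnn : ∀ i (x : Fin m → ℝ), (∀ j, 0 ≤ x j ∧ x j ≤ 1) → 0 ≤ v i x)
    (hmono : ∀ i (x x' : Fin m → ℝ), (∀ j, 0 ≤ x j ∧ x j ≤ 1) →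
      (∀ j, 0 ≤ x' j ∧ x' j ≤ 1) → (∀ j, x j ≤ x' j) → v i x ≤ v i x')
    (hsub : ∀ i (x y : Fin m → ℝ), (∀ j, 0 ≤ x j ∧ x j ≤ 1) →
      (∀ j, 0 ≤ y j ∧ y j ≤ 1) → (∀ j, 0 ≤ x j + y j ∧ x j + y j ≤ 1) →
      v i (x + y) ≤ v i x + v i y)
    (b : Fin n → Fin m → ℝ) (hb : ∀ i j, 0 ≤ b i j)
    (hpos : ∀ i j, 0 < ∑ k ∈ Finset.univ.erase i, b k j)
    (hNE : ∀ i (b' : Fin m → ℝ), (∀ j, 0 ≤ b' j) →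
      propUtility (v i) (Function.update b i b') i ≤ propUtility (v i) b i)
    (o : Fin n → Fin m → ℝ) (ho : ∀ i j, 0 ≤ o i j) (hfeas : ∀ j, ∑ i, o i j ≤ 1) :
    ∑ i, v i (propAlloc b i) ≥ (1 / 2) * ∑ i, v i (o i) :=
  stmt_5_general n m v hmono hsub b hb hpos hNE o ho hfeas
end

section
/- Consider the proportional allocation mechanism with n agents and m divisible resources, where every agent i has a monotone, normalized, subadditive valuation v_i : [0,1]^m → ℝ≥0. Let μ be a probability measure on bid profiles b ∈ (ℝ≥0)^{n×m} such that μ-almost-surely Σ_{k≠i} b_{kj} > 0 for every agent i and resource j, and such that the maps b ↦ v_i(x_i(b)), b ↦ b_{ij}, and (for each fixed pure deviation) the deviation utilities are integrable (including under the product measure μ ⊗ μ used to resample an independent copy of the opponents' bid sums). Suppose μ is a coarse correlated equilibrium: for every agent i and every fixed pure bid b'_i ∈ ℝ≥0^m, E_{b∼μ}[u_i(b)] ≥ E_{b∼μ}[u_i(b'_i, b_{-i})]. Then for every feasible allocation o (o_{ij} ≥ 0, Σ_i o_{ij} ≤ 1 for each j), E_{b∼μ}[Σ_i v_i(x_i(b))]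 ≥ (1/2)·Σ_i v_i(o_i). In other words, the coarse correlated Price of Anarchy of the proportional allocation mechanism with subadditive agents is at most 2. -/
/-!
Fix an agent `i` and write `s_j(b) = ∑_{k ≠ i} b k j`. Against opponents' bids `b`, the deviation
that bids `o i j · s_j(c)`, for `c` an independent copy of the play, costs `o i j · s_j(c)` and wins
`o i j · s_j(c) / (o i j · s_j(c) + s_j(b))` of resource `j`.
Exchanging `b` and `c`, the two winnings sum to at least `o i j` coordinatewise, so by monotonicity
and subadditivity the expected value of the deviation is at least `v i (o i) / 2`. The equilibrium
condition then bounds `v i (o i) / 2` by agent `i`'s expected value minus her expected payment plus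
the expected cost of the deviation; summed over agents, feasibility of `o` makes the deviation
costs at most the total payment.
-/

open MeasureTheory

open Finset

section Cube

variable {m : ℕ} {v : (Fin m → ℝ) → ℝ}

/-- `o` splits as `min x o + (o - min x o)`, with summands below `x` and `y`. -/
lemma le_add_of_le_add_of_subadditive
    (hmono : ∀ (x x' : Fin m → ℝ), (∀ j, 0 ≤ x j ∧ x j ≤ 1) →
      (∀ j, 0 ≤ x' j ∧ x' j ≤ 1) → (∀ j, x j ≤ x' j) → v x ≤ v x')
    (hsub : ∀ (x y : Fin m → ℝ), (∀ j, 0 ≤ x j ∧ x j ≤ 1) →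
      (∀ j, 0 ≤ y j ∧ y j ≤ 1) → (∀ j, 0 ≤ x j + y j ∧ x j + y j ≤ 1) →
      v (x + y) ≤ v x + v y)
    {o x y : Fin m → ℝ} (ho : ∀ j, 0 ≤ o j ∧ o j ≤ 1) (hx : ∀ j, 0 ≤ x j ∧ x j ≤ 1)
    (hy : ∀ j, 0 ≤ y j ∧ y j ≤ 1) (hle : ∀ j, o j ≤ x j + y j) :
    v o ≤ v x + v y := by
  set x' : Fin m → ℝ := fun j => min (x j) (o j)
  set y' : Fin m → ℝ := fun j => o j - min (x j) (o j)
  have hsplit : x' + y' = o := by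
    funext j
    simp [x', y']
  have hx' : ∀ j, 0 ≤ x' j ∧ x' j ≤ 1 := fun j =>
    ⟨le_min (hx j).1 (ho j).1, min_le_of_left_le (hx j).2⟩
  have hy' : ∀ j, 0 ≤ y' j ∧ y' j ≤ 1 := fun j => by
    have := le_min (hx j).1 (ho j).1
    exact ⟨sub_nonneg.mpr (min_le_right _ _), by linarith [(ho j).2]⟩
  have hy'y : ∀ j, y' j ≤ y j := fun j => by
    rcases le_total (x j) (o j) with h | h
    · simp only [y', min_eq_left h]
      linarith [hle j]
    · simp only [y', min_eq_right h, sub_self]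
      exact (hy j).1
  calc v o = v (x' + y') := by rw [hsplit]
    _ ≤ v x' + v y' := hsub x' y' hx' hy' fun j => by simpa [x', y'] using ho j
    _ ≤ v x + v y := add_le_add (hmono x' x hx' hx fun j => min_le_left _ _)
        (hmono y' y hy' hy hy'y)

end Cube

lemma mul_div_mul_add_mem_Icc {o s t : ℝ} (ho : 0 ≤ o) (hs : 0 < s) (ht : 0 < t) :
    o * s / (o * s + t) ∈ Set.Icc 0 1 :=
  ⟨by positivity, div_le_one_of_le₀ (le_add_of_nonneg_right ht.le) (by positivity)⟩

lemma le_mul_div_add_mul_div {o s t : ℝ} (ho : 0 ≤ o) (ho1 : o ≤ 1) (hs : 0 < s) (ht : 0 < t) :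
    o ≤ o * s / (o * s + t) + o * t / (o * t + s) := by
  have hs' : o * s / (s + t) ≤ o * s / (o * s + t) :=
    div_le_div_of_nonneg_left (by positivity) (by positivity) (by nlinarith)
  have ht' : o * t / (s + t) ≤ o * t / (o * t + s) :=
    div_le_div_of_nonneg_left (by positivity) (by positivity) (by nlinarith)
  have ho_eq : o = o * s / (s + t) + o * t / (s + t) := by
    field_simp
  linarith

lemma half_le_integral_of_le_add_swap {α : Type*} [MeasurableSpace α] {μ : Measure α}
    [IsProbabilityMeasure μ] {F : α × α → ℝ} (hF : Integrable F (μ.prod μ)) {c : ℝ}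
    (hc : ∀ᵐ p ∂μ.prod μ, c ≤ F p + F p.swap) :
    c / 2 ≤ ∫ p, F p ∂μ.prod μ := by
  have hswap : Integrable (fun p => F p.swap) (μ.prod μ) := hF.swap
  have h := integral_mono_ae (f := fun _ => c) (g := fun p => F p + F p.swap)
    (integrable_const c) (hF.add hswap) hc
  rw [integral_const, integral_add hF hswap, integral_prod_swap F] at h
  simp only [probReal_univ, one_smul] at h
  linarith

lemma sum_mul_sum_erase_le {ι κ : Type*} [Fintype ι] [DecidableEq ι] [Fintype κ]
    {o B : ι → κ → ℝ} (ho : ∀ i j, 0 ≤ o i j) (hfeas : ∀ j, ∑ i, o i j ≤ 1)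
    (hB : ∀ k j, 0 ≤ B k j) :
    ∑ i, ∑ j, o i j * ∑ k ∈ univ.erase i, B k j ≤ ∑ i, ∑ j, B i j :=
  calc ∑ i, ∑ j, o i j * ∑ k ∈ univ.erase i, B k j
      ≤ ∑ i, ∑ j, o i j * ∑ k, B k j := by
        refine sum_le_sum fun i _ => sum_le_sum fun j _ => mul_le_mul_of_nonneg_left ?_ (ho i j)
        exact sum_le_sum_of_subset_of_nonneg (erase_subset _ _) fun k _ _ => hB k j
    _ = ∑ j, (∑ i, o i j) * ∑ k, B k j := by
        rw [sum_comm]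
        simp only [sum_mul]
    _ ≤ ∑ j, ∑ k, B k j :=
        sum_le_sum fun j _ => mul_le_of_le_one_left (sum_nonneg fun k _ => hB k j) (hfeas j)
    _ = ∑ i, ∑ j, B i j := sum_comm

section Mechanism

variable {n m : ℕ}

def othersBid (b : Fin n → Fin m → ℝ) (i : Fin n) (j : Fin m) : ℝ :=
  ∑ k ∈ univ.erase i, b k j

lemma sum_update_eq_add_othersBid (b : Fin n → Fin m → ℝ) (i : Fin n) (b' : Fin m → ℝ)
    (j : Fin m) : ∑ k, Function.update b i b' k j = b' j + othersBid b i j := by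
  rw [← add_sum_erase _ _ (mem_univ i), Function.update_self, othersBid]
  congr 1
  exact sum_congr rfl fun k hk => by rw [Function.update_of_ne (ne_of_mem_erase hk)]

lemma propUtility_update_self (v : (Fin m → ℝ) → ℝ) (b : Fin n → Fin m → ℝ) (i : Fin n)
    (b' : Fin m → ℝ) :
    propUtility v (Function.update b i b') i
      = v (fun j => b' j / (b' j + othersBid b i j)) - ∑ j, b' j := by
  have halloc : propAlloc (Function.update b i b') i
      = fun j => b' j / (b' j + othersBid b i j) := by
    funext j
    rw [propAlloc, Function.update_self, sum_update_eq_add_othersBid]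
  rw [propUtility, halloc, Function.update_self]

/-- Agent `i`'s value for bidding `oi j * othersBid c i j` against the bids `b`, at `p = (b, c)`. -/
noncomputable def resampledValue (v : (Fin m → ℝ) → ℝ) (oi : Fin m → ℝ) (i : Fin n)
    (p : (Fin n → Fin m → ℝ) × (Fin n → Fin m → ℝ)) : ℝ :=
  v (fun j => oi j * othersBid p.2 i j / (oi j * othersBid p.2 i j + othersBid p.1 i j))

variable {v : (Fin m → ℝ) → ℝ} {μ : Measure (Fin n → Fin m → ℝ)} {oi : Fin m → ℝ} {i : Fin n}

lemma integrable_othersBid (hint_bid : ∀ k j, Integrable (fun b => b k j) μ) (j : Fin m) :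
    Integrable (fun c => othersBid c i j) μ :=
  integrable_finsetSum _ fun k _ => hint_bid k j

lemma integral_othersBid (hint_bid : ∀ k j, Integrable (fun b => b k j) μ) (j : Fin m) :
    ∫ c, othersBid c i j ∂μ = ∑ k ∈ univ.erase i, ∫ b, b k j ∂μ :=
  integral_finsetSum _ fun k _ => hint_bid k j

lemma integral_propUtility (hval : Integrable (fun b => v (propAlloc b i)) μ)
    (hbid : ∀ j, Integrable (fun b => b i j) μ) :
    ∫ b, propUtility v b i ∂μ = ∫ b, v (propAlloc b i) ∂μ - ∑ j, ∫ b, b i j ∂μ := by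
  rw [← integral_finsetSum _ fun j _ => hbid j,
    ← integral_sub hval (integrable_finsetSum _ fun j _ => hbid j)]
  rfl

variable [IsProbabilityMeasure μ]

lemma half_le_integral_resampledValue
    (hmono : ∀ (x x' : Fin m → ℝ), (∀ j, 0 ≤ x j ∧ x j ≤ 1) →
      (∀ j, 0 ≤ x' j ∧ x' j ≤ 1) → (∀ j, x j ≤ x' j) → v x ≤ v x')
    (hsub : ∀ (x y : Fin m → ℝ), (∀ j, 0 ≤ x j ∧ x j ≤ 1) →
      (∀ j, 0 ≤ y j ∧ y j ≤ 1) → (∀ j, 0 ≤ x j + y j ∧ x j + y j ≤ 1) →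
      v (x + y) ≤ v x + v y)
    (hpos : ∀ᵐ b ∂μ, ∀ j, 0 < othersBid b i j) (hoi : ∀ j, 0 ≤ oi j ∧ oi j ≤ 1)
    (hint : Integrable (resampledValue v oi i) (μ.prod μ)) :
    v oi / 2 ≤ ∫ p, resampledValue v oi i p ∂μ.prod μ := by
  refine half_le_integral_of_le_add_swap hint ?_
  have h₁ := (Measure.quasiMeasurePreserving_fst (μ := μ) (ν := μ)).ae hpos
  have h₂ := (Measure.quasiMeasurePreserving_snd (μ := μ) (ν := μ)).ae hpos
  filter_upwards [h₁, h₂] with p hp₁ hp₂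
  exact le_add_of_le_add_of_subadditive hmono hsub hoi
    (fun j => mul_div_mul_add_mem_Icc (hoi j).1 (hp₂ j) (hp₁ j))
    (fun j => mul_div_mul_add_mem_Icc (hoi j).1 (hp₁ j) (hp₂ j))
    (fun j => le_mul_div_add_mul_div (hoi j).1 (hoi j).2 (hp₂ j) (hp₁ j))

/-- The equilibrium condition against the deviations `oi * othersBid c i`, averaged over `c`. -/
lemma integral_resampledValue_sub_le
    (hbnn : ∀ᵐ b ∂μ, ∀ i j, 0 ≤ b i j)
    (hint_bid : ∀ k j, Integrable (fun b => b k j) μ)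
    (hint_dev : ∀ b' : Fin m → ℝ,
      Integrable (fun b => propUtility v (Function.update b i b') i) μ)
    (hoi : ∀ j, 0 ≤ oi j) (hint : Integrable (resampledValue v oi i) (μ.prod μ))
    (hCCE : ∀ b' : Fin m → ℝ, (∀ j, 0 ≤ b' j) →
      ∫ b, propUtility v (Function.update b i b') i ∂μ ≤ ∫ b, propUtility v b i ∂μ) :
    ∫ p, resampledValue v oi i p ∂μ.prod μ - ∑ j, oi j * ∑ k ∈ univ.erase i, ∫ b, b k j ∂μ
      ≤ ∫ b, propUtility v b i ∂μ := by
  have hcost : Integrable (fun c => ∑ j, oi j * othersBid c i j) μ :=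
    integrable_finsetSum _ fun j _ => (integrable_othersBid hint_bid j).const_mul _
  have hpointwise : ∀ᵐ c ∂μ, ∫ b, resampledValue v oi i (b, c) ∂μ - ∑ j, oi j * othersBid c i j
      ≤ ∫ b, propUtility v b i ∂μ := by
    filter_upwards [hbnn] with c hc
    set b' : Fin m → ℝ := fun j => oi j * othersBid c i j
    have hdev : ∀ b, propUtility v (Function.update b i b') i
        = resampledValue v oi i (b, c) - ∑ j, b' j := fun b => propUtility_update_self v b i b'
    have hint_c : Integrable (fun b => resampledValue v oi i (b, c)) μ :=
      ((hint_dev b').add (integrable_const (∑ j, b' j))).congr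
        (.of_forall fun b => by simp only [Pi.add_apply, hdev b, sub_add_cancel])
    have := hCCE b' fun j => mul_nonneg (hoi j) (sum_nonneg fun k _ => hc k j)
    simp only [hdev] at this
    rwa [integral_sub hint_c (integrable_const _), integral_const, probReal_univ,
      one_smul] at this
  have hvalue : ∫ c, ∫ b, resampledValue v oi i (b, c) ∂μ ∂μ
      = ∫ p, resampledValue v oi i p ∂μ.prod μ := (integral_prod_symm _ hint).symm
  have hcost_eq : ∫ c, ∑ j, oi j * othersBid c i j ∂μ
      = ∑ j, oi j * ∑ k ∈ univ.erase i, ∫ b, b k j ∂μ := by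
    rw [integral_finsetSum _ fun j _ => (integrable_othersBid hint_bid j).const_mul _]
    simp only [integral_const_mul, integral_othersBid hint_bid]
  have h := integral_mono_ae
    (f := fun c => ∫ b, resampledValue v oi i (b, c) ∂μ - ∑ j, oi j * othersBid c i j)
    (hint.integral_prod_right.sub hcost) (integrable_const _) hpointwise
  rwa [integral_sub hint.integral_prod_right hcost, integral_const, probReal_univ, one_smul,
    hvalue, hcost_eq] at h

end Mechanism

theorem stmt_6_general (n m : ℕ) (v : Fin n → (Fin m → ℝ) → ℝ)
    (hmono : ∀ i (x x' : Fin m → ℝ), (∀ j, 0 ≤ x j ∧ x j ≤ 1) →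
      (∀ j, 0 ≤ x' j ∧ x' j ≤ 1) → (∀ j, x j ≤ x' j) → v i x ≤ v i x')
    (hsub : ∀ i (x y : Fin m → ℝ), (∀ j, 0 ≤ x j ∧ x j ≤ 1) →
      (∀ j, 0 ≤ y j ∧ y j ≤ 1) → (∀ j, 0 ≤ x j + y j ∧ x j + y j ≤ 1) →
      v i (x + y) ≤ v i x + v i y)
    (μ : Measure (Fin n → Fin m → ℝ)) [IsProbabilityMeasure μ]
    (hbnn : ∀ᵐ b ∂μ, ∀ i j, 0 ≤ b i j)
    (hpos : ∀ᵐ b ∂μ, ∀ i j, 0 < ∑ k ∈ Finset.univ.erase i, b k j)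
    (hint_val : ∀ i, Integrable (fun b => v i (propAlloc b i)) μ)
    (hint_bid : ∀ i j, Integrable (fun b => b i j) μ)
    (hint_dev : ∀ i (b' : Fin m → ℝ),
      Integrable (fun b => propUtility (v i) (Function.update b i b') i) μ)
    (o : Fin n → Fin m → ℝ) (ho : ∀ i j, 0 ≤ o i j) (hfeas : ∀ j, ∑ i, o i j ≤ 1)
    (hint_prod : ∀ i, Integrable
      (fun bb : (Fin n → Fin m → ℝ) × (Fin n → Fin m → ℝ) =>
        v i (fun j => o i j * (∑ k ∈ Finset.univ.erase i, bb.2 k j) /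
          (o i j * (∑ k ∈ Finset.univ.erase i, bb.2 k j)
            + ∑ k ∈ Finset.univ.erase i, bb.1 k j)))
      (μ.prod μ))
    (hCCE : ∀ i (b' : Fin m → ℝ), (∀ j, 0 ≤ b' j) →
      ∫ b, propUtility (v i) (Function.update b i b') i ∂μ
        ≤ ∫ b, propUtility (v i) b i ∂μ) :
    ∫ b, ∑ i, v i (propAlloc b i) ∂μ ≥ (1 / 2) * ∑ i, v i (o i) := by
  have ho_le_one : ∀ i j, o i j ≤ 1 := fun i j =>
    (single_le_sum (fun k _ => ho k j) (mem_univ i)).trans (hfeas j)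
  have hagent : ∀ i, v i (o i) / 2 ≤ ∫ b, v i (propAlloc b i) ∂μ - ∑ j, ∫ b, b i j ∂μ
      + ∑ j, o i j * ∑ k ∈ univ.erase i, ∫ b, b k j ∂μ := fun i => by
    have hdev := half_le_integral_resampledValue (hmono i) (hsub i) (hpos.mono fun b hb => hb i)
      (fun j => ⟨ho i j, ho_le_one i j⟩) (hint_prod i)
    have hequil := integral_resampledValue_sub_le hbnn hint_bid (hint_dev i) (ho i)
      (hint_prod i) (hCCE i)
    rw [integral_propUtility (hint_val i) (hint_bid i)] at hequil
    linarith
  have hcost := sum_mul_sum_erase_le ho hfeas fun k j =>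
    integral_nonneg_of_ae (hbnn.mono fun b hb => hb k j)
  have hsum := sum_le_sum fun i (_ : i ∈ univ) => hagent i
  rw [sum_add_distrib, sum_sub_distrib, ← sum_div] at hsum
  rw [integral_finsetSum _ fun i _ => hint_val i]
  linarith

/-- the coarse correlated Price of Anarchy of the proportional
allocation mechanism with monotone, normalized, subadditive valuations is at
most `2`: at any coarse correlated equilibrium `μ` (a probability measure over
bid profiles that are a.s. nonnegative with positive opponents' bid sums, under
the stated integrability conditions, including for the resampled deviations
under `μ ⊗ μ`), the expected social welfare is at least half of the welfare of
any feasible allocation `o`. -/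
theorem stmt_6 (n m : ℕ) (v : Fin n → (Fin m → ℝ) → ℝ)
    (hv0 : ∀ i, v i 0 = 0)
    (hvnn : ∀ i (x : Fin m → ℝ), (∀ j, 0 ≤ x j ∧ x j ≤ 1) → 0 ≤ v i x)
    (hmono : ∀ i (x x' : Fin m → ℝ), (∀ j, 0 ≤ x j ∧ x j ≤ 1) →
      (∀ j, 0 ≤ x' j ∧ x' j ≤ 1) → (∀ j, x j ≤ x' j) → v i x ≤ v i x')
    (hsub : ∀ i (x y : Fin m → ℝ), (∀ j, 0 ≤ x j ∧ x j ≤ 1) →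
      (∀ j, 0 ≤ y j ∧ y j ≤ 1) → (∀ j, 0 ≤ x j + y j ∧ x j + y j ≤ 1) →
      v i (x + y) ≤ v i x + v i y)
    (μ : Measure (Fin n → Fin m → ℝ)) [IsProbabilityMeasure μ]
    (hbnn : ∀ᵐ b ∂μ, ∀ i j, 0 ≤ b i j)
    (hpos : ∀ᵐ b ∂μ, ∀ i j, 0 < ∑ k ∈ Finset.univ.erase i, b k j)
    (hint_val : ∀ i, Integrable (fun b => v i (propAlloc b i)) μ)
    (hint_bid : ∀ i j, Integrable (fun b => b i j) μ)
    (hint_dev : ∀ i (b' : Fin m → ℝ),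
      Integrable (fun b => propUtility (v i) (Function.update b i b') i) μ)
    (o : Fin n → Fin m → ℝ) (ho : ∀ i j, 0 ≤ o i j) (hfeas : ∀ j, ∑ i, o i j ≤ 1)
    (hint_prod : ∀ i, Integrable
      (fun bb : (Fin n → Fin m → ℝ) × (Fin n → Fin m → ℝ) =>
        v i (fun j => o i j * (∑ k ∈ Finset.univ.erase i, bb.2 k j) /
          (o i j * (∑ k ∈ Finset.univ.erase i, bb.2 k j)
            + ∑ k ∈ Finset.univ.erase i, bb.1 k j)))
      (μ.prod μ))
    (hCCE : ∀ i (b' : Fin m → ℝ), (∀ j, 0 ≤ b' j) →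
      ∫ b, propUtility (v i) (Function.update b i b') i ∂μ
        ≤ ∫ b, propUtility (v i) b i ∂μ) :
    ∫ b, ∑ i, v i (propAlloc b i) ∂μ ≥ (1 / 2) * ∑ i, v i (o i) :=
  stmt_6_general n m v hmono hsub μ hbnn hpos hint_val hint_bid hint_dev o ho hfeas hint_prod hCCE
end

section
/- Consider the proportional allocation mechanism with n agents and m divisible resources in a Bayesian setting with finite type spaces: each agent i has a nonempty finite type set V_i whose elements are monotone, normalized, subadditive valuations v_i : [0,1]^m → ℝ≥0, drawn independently according to weights q_i : V_i → ℝ≥0 with Σ_{v_i∈V_i} q_i(v_i) = 1. Let β_i : V_i → ℝ≥0^m give each type's pure bid, and assume that for every type profile v in the support, every agent i and every resource j, Σ_{k≠i} β_k(v_k)_j > 0. Suppose β is a pure Bayesian Nash equilibrium: for every agent i, every type v_i ∈ V_i, and every pure deviation b'_i ∈ ℝ≥0^m, E_{v_{-i}}[u_i^{v_i}(β_i(v_i), β_{-i}(v_{-i}))] ≥ E_{v_{-i}}[u_i^{v_i}(b'_i, β_{-i}(v_{-i}))], where the expectation is the weighted finite sum over v_{-i}. Then E_v[Σ_i v_i(x_i(β(v)))]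 ≥ (1/2)·E_v[max over feasible allocations o of Σ_i v_i(o_i)]. In other words, the Bayesian Price of Anarchy of the proportional allocation mechanism with subadditive agents is at most 2. -/
/-! A smoothness argument. Let `o` be an almost optimal allocation rule and `B₋ᵢ(t)` the sum of
the other agents' bids at profile `t`. Agent `i` of type `s` may deviate to the bid
`o(w[i ↦ s])ᵢ · B₋ᵢ(w')` for any profiles `w, w'`. Against the actual competition `B₋ᵢ(t)` it
wins `oa / (oa + c)` with `a = B₋ᵢ(w')`, `c = B₋ᵢ(t)`. Averaging over independent `w'` and `t`,
which are identically distributed, `o ≤ oa / (oa + c) + oc / (oc + a)` together with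
monotonicity and subadditivity makes the deviation worth at least half the value of `o`, at a
price of at most `o` times the expected revenue. Averaging the equilibrium inequality over types
and summing over agents, feasibility of `o` leaves expected welfare minus revenue at least half
the optimum minus revenue. -/

namespace ProportionalAllocation

open Finset Function

section Expectation

variable {Ω Ω' : Type*} [Fintype Ω] [Fintype Ω'] {p : Ω → ℝ}

noncomputable def expectation (p : Ω → ℝ) (f : Ω → ℝ) : ℝ := ∑ x, p x * f x

theorem expectation_const (hp1 : ∑ x, p x = 1) (c : ℝ) : expectation p (fun _ => c) = c := by
  rw [expectation, ← sum_mul, hp1, one_mul]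

theorem expectation_add (f g : Ω → ℝ) :
    expectation p (fun x => f x + g x) = expectation p f + expectation p g := by
  simp only [expectation, mul_add, sum_add_distrib]

theorem expectation_sub (f g : Ω → ℝ) :
    expectation p (fun x => f x - g x) = expectation p f - expectation p g := by
  simp only [expectation, mul_sub, sum_sub_distrib]

theorem expectation_const_mul (c : ℝ) (f : Ω → ℝ) :
    expectation p (fun x => c * f x) = c * expectation p f := by
  simp only [expectation, mul_sum, mul_left_comm]

theorem expectation_sum {ι : Type*} (s : Finset ι) (f : ι → Ω → ℝ) :
    expectation p (fun x => ∑ i ∈ s, f i x) = ∑ i ∈ s, expectation p (f i) := by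
  simp only [expectation, mul_sum]
  exact sum_comm

theorem expectation_mono (hp : ∀ x, 0 ≤ p x) {f g : Ω → ℝ} (h : ∀ x, 0 < p x → f x ≤ g x) :
    expectation p f ≤ expectation p g := by
  refine sum_le_sum fun x _ => ?_
  rcases (hp x).eq_or_lt with hx | hx
  · simp [← hx]
  · exact mul_le_mul_of_nonneg_left (h x hx) hx.le

theorem expectation_comm (p' : Ω' → ℝ) (F : Ω → Ω' → ℝ) :
    expectation p (fun x => expectation p' (F x)) =
      expectation p' (fun y => expectation p (fun x => F x y)) := by
  simp only [expectation, mul_sum]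
  rw [sum_comm]
  exact sum_congr rfl fun y _ => sum_congr rfl fun x _ => mul_left_comm _ _ _

theorem half_le_expectation_expectation (hp : ∀ x, 0 ≤ p x) (hp1 : ∑ x, p x = 1)
    {F : Ω → Ω → ℝ} {g : ℝ} (hF : ∀ x y, 0 < p x → 0 < p y → g ≤ F x y + F y x) :
    g / 2 ≤ expectation p (fun x => expectation p (F x)) := by
  have hswap := expectation_comm (p := p) p F
  have hsum : g ≤ expectation p (fun x => expectation p (fun y => F x y + F y x)) :=
    calc g = expectation p (fun _ => expectation p (fun _ => g)) := by
          simp only [expectation_const hp1]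
      _ ≤ _ := expectation_mono hp fun x hx => expectation_mono hp fun y hy => hF x y hx hy
  simp only [expectation_add] at hsum
  linarith

theorem expectation_sSup_le (hp : ∀ x, 0 ≤ p x) (hp1 : ∑ x, p x = 1) {S : Ω → Set ℝ}
    (hS : ∀ x, (S x).Nonempty) {B : ℝ}
    (h : ∀ w : Ω → ℝ, (∀ x, w x ∈ S x) → expectation p w ≤ B) :
    expectation p (fun x => sSup (S x)) ≤ B := by
  refine le_of_forall_pos_le_add fun ε hε => ?_
  choose w hwS hw using fun x => exists_lt_of_lt_csSup (hS x) (sub_lt_self (sSup (S x)) hε)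
  calc expectation p (fun x => sSup (S x)) ≤ expectation p (fun x => w x + ε) :=
        expectation_mono hp fun x _ => by linarith [hw x]
    _ = expectation p w + ε := by rw [expectation_add, expectation_const hp1]
    _ ≤ B + ε := by linarith [h w hwS]

end Expectation

section Profiles

variable {ι : Type*} [Fintype ι] {V : ι → Type*} {q : ∀ i, V i → ℝ}

noncomputable def profileProb (q : ∀ i, V i → ℝ) (t : ∀ i, V i) : ℝ := ∏ i, q i (t i)

theorem profileProb_nonneg (hq : ∀ i s, 0 ≤ q i s) (t : ∀ i, V i) : 0 ≤ profileProb q t :=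
  prod_nonneg fun i _ => hq i (t i)

theorem sum_profileProb [DecidableEq ι] [∀ i, Fintype (V i)] (hq1 : ∀ i, ∑ s, q i s = 1) :
    ∑ t, profileProb q t = 1 := by
  simp only [profileProb, ← Fintype.prod_sum, hq1, prod_const_one]

theorem mul_profileProb_update [DecidableEq ι] (i : ι) (s : V i) (t : ∀ i, V i) :
    q i (t i) * profileProb q (update t i s) = q i s * profileProb q t := by
  simp only [profileProb, ← mul_prod_erase univ _ (mem_univ i), update_self]
  rw [prod_congr rfl fun k hk => by rw [update_of_ne (ne_of_mem_erase hk)]]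
  ring

/-- Redrawing agent `i`'s type independently of the others does not change the distribution. -/
theorem sum_mul_expectation_update [DecidableEq ι] [∀ i, Fintype (V i)]
    (hq1 : ∀ i, ∑ s, q i s = 1) (i : ι) (g : V i → (∀ k, V k) → ℝ) :
    ∑ s, q i s * expectation (profileProb q) (fun t => g s (update t i s)) =
      expectation (profileProb q) (fun t => g (t i) t) := by
  have hinv : Involutive fun x : V i × (∀ k, V k) => (x.2 i, update x.2 i x.1) := by
    intro x
    simp
  calc ∑ s, q i s * expectation (profileProb q) (fun t => g s (update t i s))
      = ∑ x : V i × (∀ k, V k), q i x.1 * profileProb q x.2 * g x.1 (update x.2 i x.1) := by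
        simp only [expectation, Fintype.sum_prod_type, mul_sum, mul_assoc]
    _ = ∑ x : V i × (∀ k, V k), q i x.1 * (profileProb q x.2 * g (x.2 i) x.2) := by
        refine Fintype.sum_bijective _ hinv.bijective _ _ fun x => ?_
        dsimp only
        rw [update_self, ← mul_assoc, mul_profileProb_update]
    _ = expectation (profileProb q) (fun t => g (t i) t) := by
        rw [Fintype.sum_prod_type]
        dsimp only
        rw [← sum_mul_sum, hq1, one_mul]
        rfl

end Profiles

section Valuations

variable {ι : Type*}

def unitCube (ι : Type*) : Set (ι → ℝ) := {x | ∀ j, 0 ≤ x j ∧ x j ≤ 1}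

def SubadditiveOnCube (v : (ι → ℝ) → ℝ) : Prop :=
  ∀ x y, x ∈ unitCube ι → y ∈ unitCube ι → x + y ∈ unitCube ι → v (x + y) ≤ v x + v y

/-- The share of each resource won by bidding `b` against competing bids totalling `c`. -/
noncomputable def bidShare (b c : ι → ℝ) : ι → ℝ := fun j => b j / (b j + c j)

theorem bidShare_mem_unitCube {b c : ι → ℝ} (hb : ∀ j, 0 ≤ b j) (hc : ∀ j, 0 ≤ c j) :
    bidShare b c ∈ unitCube ι := fun j =>
  ⟨div_nonneg (hb j) (add_nonneg (hb j) (hc j)),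
    div_le_one_of_le₀ (le_add_of_nonneg_right (hc j)) (add_nonneg (hb j) (hc j))⟩

theorem bidShare_add_bidShare_mem_unitCube {o a c : ι → ℝ} (ho : o ∈ unitCube ι)
    (ha : ∀ j, 0 < a j) (hc : ∀ j, 0 < c j) :
    bidShare (o * a) c + bidShare (o * c) a ∈ unitCube ι := by
  intro j
  obtain ⟨ho0, ho1⟩ := ho j
  have ha := ha j
  have hc := hc j
  simp only [Pi.add_apply, bidShare, Pi.mul_apply]
  refine ⟨by positivity, ?_⟩
  rw [div_add_div _ _ (by positivity) (by positivity), div_le_one (by positivity)]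
  nlinarith [mul_nonneg (mul_nonneg (sub_nonneg.2 ho1) ha.le) hc.le,
    mul_nonneg (mul_nonneg (mul_nonneg ho0 (sub_nonneg.2 ho1)) ha.le) hc.le]

theorem le_bidShare_add_bidShare {o a c : ι → ℝ} (ho : o ∈ unitCube ι)
    (ha : ∀ j, 0 < a j) (hc : ∀ j, 0 < c j) :
    o ≤ bidShare (o * a) c + bidShare (o * c) a := by
  intro j
  obtain ⟨ho0, ho1⟩ := ho j
  have ha := ha j
  have hc := hc j
  simp only [Pi.add_apply, bidShare, Pi.mul_apply]
  rw [div_add_div _ _ (by positivity) (by positivity), le_div_iff₀ (by positivity)]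
  nlinarith [mul_nonneg (mul_nonneg ho0 (sub_nonneg.2 ho1)) (sq_nonneg (a j - c j)),
    mul_nonneg (mul_nonneg (mul_nonneg ho0 (sub_nonneg.2 ho1)) (by linarith : (0:ℝ) ≤ 1 + o j))
      (mul_nonneg ha.le hc.le)]

theorem le_val_bidShare_add_val_bidShare {v : (ι → ℝ) → ℝ} (hmono : MonotoneOn v (unitCube ι))
    (hsub : SubadditiveOnCube v) {o a c : ι → ℝ} (ho : o ∈ unitCube ι)
    (ha : ∀ j, 0 < a j) (hc : ∀ j, 0 < c j) :
    v o ≤ v (bidShare (o * a) c) + v (bidShare (o * c) a) := by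
  have hoa : ∀ j, 0 ≤ (o * a) j := fun j => mul_nonneg (ho j).1 (ha j).le
  have hoc : ∀ j, 0 ≤ (o * c) j := fun j => mul_nonneg (ho j).1 (hc j).le
  have hsum := bidShare_add_bidShare_mem_unitCube ho ha hc
  exact (hmono ho hsum (le_bidShare_add_bidShare ho ha hc)).trans
    (hsub _ _ (bidShare_mem_unitCube hoa fun j => (hc j).le)
      (bidShare_mem_unitCube hoc fun j => (ha j).le) hsum)

/-- The deviation behind this bound bids `o` scaled by an independent copy of the competing
totals `a`. -/
theorem half_val_sub_le_of_forall_bid [Fintype ι] {Ω : Type*} [Fintype Ω] {p : Ω → ℝ}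
    (hp : ∀ x, 0 ≤ p x) (hp1 : ∑ x, p x = 1) {v : (ι → ℝ) → ℝ}
    (hmono : MonotoneOn v (unitCube ι)) (hsub : SubadditiveOnCube v) {a : Ω → ι → ℝ}
    (ha : ∀ x, 0 < p x → ∀ j, 0 < a x j) {U : ℝ}
    (hU : ∀ b : ι → ℝ, (∀ j, 0 ≤ b j) →
      expectation p (fun x => v (bidShare b (a x))) - ∑ j, b j ≤ U)
    {o : ι → ℝ} (ho : o ∈ unitCube ι) :
    v o / 2 - ∑ j, o j * expectation p (fun x => a x j) ≤ U := by
  have hhalf : v o / 2 ≤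
      expectation p (fun y => expectation p (fun x => v (bidShare (o * a y) (a x)))) :=
    half_le_expectation_expectation hp hp1 fun y x hy hx =>
      le_val_bidShare_add_val_bidShare hmono hsub ho (ha y hy) (ha x hx)
  have hdev : expectation p (fun y =>
      expectation p (fun x => v (bidShare (o * a y) (a x))) - ∑ j, o j * a y j) ≤ U :=
    (expectation_mono hp fun y hy =>
      hU (o * a y) fun j => mul_nonneg (ho j).1 (ha y hy j).le).trans
      (expectation_const hp1 U).le
  simp only [expectation_sub, expectation_sum, expectation_const_mul] at hdev
  linarith

end Valuations

section Mechanism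

variable {n m : ℕ}

def othersBid (b : Fin n → Fin m → ℝ) (i : Fin n) : Fin m → ℝ :=
  fun j => ∑ k ∈ univ.erase i, b k j

theorem othersBid_le_sum {b : Fin n → Fin m → ℝ} (hb : ∀ k j, 0 ≤ b k j) (i : Fin n)
    (j : Fin m) : othersBid b i j ≤ ∑ k, b k j :=
  sum_le_sum_of_subset_of_nonneg (erase_subset _ _) fun k _ _ => hb k j

theorem othersBid_comp_update {V : Fin n → Type*} (β : ∀ i, V i → Fin m → ℝ) (t : ∀ i, V i)
    (i : Fin n) (s : V i) :
    othersBid (fun k => β k (update t i s k)) i = othersBid (fun k => β k (t k)) i :=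
  funext fun _ => sum_congr rfl fun k hk => by
    dsimp only
    rw [update_of_ne (ne_of_mem_erase hk)]

theorem propUtility_update (v : (Fin m → ℝ) → ℝ) (b : Fin n → Fin m → ℝ) (i : Fin n)
    (b' : Fin m → ℝ) :
    propUtility v (update b i b') i = v (bidShare b' (othersBid b i)) - ∑ j, b' j := by
  have hden : ∀ j, ∑ k, update b i b' k j = b' j + othersBid b i j := fun j => by
    rw [← add_sum_erase univ _ (mem_univ i), update_self]
    exact congrArg _ (sum_congr rfl fun k hk => by rw [update_of_ne (ne_of_mem_erase hk)])
  simp only [propUtility, update_self]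
  congr 2
  funext j
  simp only [propAlloc, bidShare, hden, update_self]

theorem sum_propUtility (v : Fin n → (Fin m → ℝ) → ℝ) (b : Fin n → Fin m → ℝ) :
    ∑ i, propUtility (v i) b i = ∑ i, v i (propAlloc b i) - ∑ j, ∑ k, b k j := by
  simp only [propUtility, sum_sub_distrib]
  rw [sum_comm]

noncomputable def optimalWelfare (v : Fin n → (Fin m → ℝ) → ℝ) : ℝ :=
  sSup {w : ℝ | ∃ o : Fin n → Fin m → ℝ,
    (∀ i j, 0 ≤ o i j) ∧ (∀ j, ∑ i, o i j ≤ 1) ∧ w = ∑ i, v i (o i)}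

end Mechanism

section Equilibrium

variable {n m : ℕ} {V : Fin n → Type*} [∀ i, Fintype (V i)]
  {val : ∀ i, V i → (Fin m → ℝ) → ℝ} {q : ∀ i, V i → ℝ} {β : ∀ i, V i → Fin m → ℝ}

def IsBayesNash (val : ∀ i, V i → (Fin m → ℝ) → ℝ) (q : ∀ i, V i → ℝ)
    (β : ∀ i, V i → Fin m → ℝ) : Prop :=
  ∀ i (s : V i) (b : Fin m → ℝ), (∀ j, 0 ≤ b j) →
    expectation (profileProb q)
        (fun t => propUtility (val i s) (update (fun k => β k (update t i s k)) i b) i)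
      ≤ expectation (profileProb q)
        (fun t => propUtility (val i s) (fun k => β k (update t i s k)) i)

theorem expectation_half_val_sub_le_utility
    (hmono : ∀ i t, MonotoneOn (val i t) (unitCube (Fin m)))
    (hsub : ∀ i t, SubadditiveOnCube (val i t))
    (hq : ∀ i s, 0 ≤ q i s) (hq1 : ∀ i, ∑ s, q i s = 1) (hβ : ∀ i t j, 0 ≤ β i t j)
    (hpos : ∀ t, 0 < profileProb q t → ∀ i j, 0 < othersBid (fun k => β k (t k)) i j)
    (hBNE : IsBayesNash val q β)
    {O : (∀ i, V i) → Fin n → Fin m → ℝ} (hO : ∀ t i, O t i ∈ unitCube (Fin m)) (i : Fin n) :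
    expectation (profileProb q) (fun t => val i (t i) (O t i) / 2 -
        ∑ j, O t i j * expectation (profileProb q) (fun t => ∑ k, β k (t k) j))
      ≤ expectation (profileProb q)
        (fun t => propUtility (val i (t i)) (fun k => β k (t k)) i) := by
  have hP := profileProb_nonneg hq
  have hP1 := sum_profileProb hq1
  set R : Fin m → ℝ := fun j => expectation (profileProb q) (fun t => ∑ k, β k (t k) j)
  have hdev : ∀ (s : V i) (o : Fin m → ℝ), o ∈ unitCube (Fin m) →
      val i s o / 2 - ∑ j, o j * R j ≤ expectation (profileProb q)
        (fun t => propUtility (val i s) (fun k => β k (update t i s k)) i) := by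
    intro s o ho
    refine le_trans (sub_le_sub_left (sum_le_sum fun j _ => mul_le_mul_of_nonneg_left
      (expectation_mono hP fun t _ => othersBid_le_sum (fun k => hβ k (t k)) i j) (ho j).1) _)
      (half_val_sub_le_of_forall_bid hP hP1 (hmono i s) (hsub i s) (fun t ht => hpos t ht i)
        (fun b hb => ?_) ho)
    refine le_trans (le_of_eq ?_) (hBNE i s b hb)
    simp only [propUtility_update, othersBid_comp_update]
    rw [expectation_sub, expectation_const hP1]
  have havg : ∀ s : V i, expectation (profileProb q)
      (fun w => val i s (O (update w i s) i) / 2 - ∑ j, O (update w i s) i j * R j)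
      ≤ expectation (profileProb q)
        (fun t => propUtility (val i s) (fun k => β k (update t i s k)) i) := fun s =>
    (expectation_mono hP fun w _ => hdev s _ (hO _ i)).trans (expectation_const hP1 _).le
  have hmix := sum_le_sum fun s (_ : s ∈ univ) => mul_le_mul_of_nonneg_left (havg s) (hq i s)
  rwa [sum_mul_expectation_update hq1 i
      (fun s u => val i s (O u i) / 2 - ∑ j, O u i j * R j),
    sum_mul_expectation_update hq1 i
      (fun s u => propUtility (val i s) (fun k => β k (u k)) i)] at hmix

theorem half_expectation_le_expectation_welfare
    (hmono : ∀ i t, MonotoneOn (val i t) (unitCube (Fin m)))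
    (hsub : ∀ i t, SubadditiveOnCube (val i t))
    (hq : ∀ i s, 0 ≤ q i s) (hq1 : ∀ i, ∑ s, q i s = 1) (hβ : ∀ i t j, 0 ≤ β i t j)
    (hpos : ∀ t, 0 < profileProb q t → ∀ i j, 0 < othersBid (fun k => β k (t k)) i j)
    (hBNE : IsBayesNash val q β)
    {O : (∀ i, V i) → Fin n → Fin m → ℝ} (hO0 : ∀ t i j, 0 ≤ O t i j)
    (hO1 : ∀ t j, ∑ i, O t i j ≤ 1) :
    1 / 2 * expectation (profileProb q) (fun t => ∑ i, val i (t i) (O t i)) ≤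
      expectation (profileProb q)
        (fun t => ∑ i, val i (t i) (propAlloc (fun k => β k (t k)) i)) := by
  have hP := profileProb_nonneg hq
  have hP1 := sum_profileProb hq1
  set R : Fin m → ℝ := fun j => expectation (profileProb q) (fun t => ∑ k, β k (t k) j)
  have hR : ∀ j, 0 ≤ R j := fun j => (expectation_const hP1 0).symm.le.trans
    (expectation_mono hP fun t _ => sum_nonneg fun k _ => hβ k (t k) j)
  have hO : ∀ t i, O t i ∈ unitCube (Fin m) := fun t i j =>
    ⟨hO0 t i j, (single_le_sum (fun k _ => hO0 t k j) (mem_univ i)).trans (hO1 t j)⟩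
  have hpointwise : ∀ t, 1 / 2 * ∑ i, val i (t i) (O t i) - ∑ j, R j ≤
      ∑ i, (val i (t i) (O t i) / 2 - ∑ j, O t i j * R j) := by
    intro t
    have hpay : ∑ i, ∑ j, O t i j * R j ≤ ∑ j, R j := by
      rw [sum_comm]
      exact sum_le_sum fun j _ => by rw [← sum_mul]; exact mul_le_of_le_one_left (hR j) (hO1 t j)
    rw [sum_sub_distrib, ← sum_div]
    linarith
  have hagents := sum_le_sum fun i (_ : i ∈ univ) =>
    expectation_half_val_sub_le_utility hmono hsub hq hq1 hβ hpos hBNE hO i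
  have hmain :
      1 / 2 * expectation (profileProb q) (fun t => ∑ i, val i (t i) (O t i)) - ∑ j, R j ≤
        expectation (profileProb q)
          (fun t => ∑ i, val i (t i) (propAlloc (fun k => β k (t k)) i)) - ∑ j, R j :=
    calc _ = expectation (profileProb q)
          (fun t => 1 / 2 * ∑ i, val i (t i) (O t i) - ∑ j, R j) := by
          rw [expectation_sub, expectation_const_mul, expectation_const hP1]
      _ ≤ _ := expectation_mono hP fun t _ => hpointwise t
      _ ≤ ∑ i, expectation (profileProb q)
            (fun t => propUtility (val i (t i)) (fun k => β k (t k)) i) := by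
          rw [expectation_sum]
          exact hagents
      _ = _ := by
          rw [← expectation_sum]
          simp only [sum_propUtility]
          rw [expectation_sub]
          exact congrArg _ (expectation_sum _ _)
  linarith

theorem half_expectation_optimalWelfare_le
    (hmono : ∀ i t, MonotoneOn (val i t) (unitCube (Fin m)))
    (hsub : ∀ i t, SubadditiveOnCube (val i t))
    (hq : ∀ i s, 0 ≤ q i s) (hq1 : ∀ i, ∑ s, q i s = 1) (hβ : ∀ i t j, 0 ≤ β i t j)
    (hpos : ∀ t, 0 < profileProb q t → ∀ i j, 0 < othersBid (fun k => β k (t k)) i j)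
    (hBNE : IsBayesNash val q β) :
    1 / 2 * expectation (profileProb q) (fun t => optimalWelfare fun i => val i (t i)) ≤
      expectation (profileProb q)
        (fun t => ∑ i, val i (t i) (propAlloc (fun k => β k (t k)) i)) := by
  suffices expectation (profileProb q) (fun t => optimalWelfare fun i => val i (t i)) ≤
      2 * expectation (profileProb q)
        (fun t => ∑ i, val i (t i) (propAlloc (fun k => β k (t k)) i)) by linarith
  unfold optimalWelfare
  refine expectation_sSup_le (profileProb_nonneg hq) (sum_profileProb hq1) ?_ fun w hw => ?_
  · exact fun t => ⟨_, 0, fun _ _ => le_rfl, fun _ => by simp, rfl⟩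
  choose O hO0 hO1 hw using hw
  rw [funext hw]
  linarith [half_expectation_le_expectation_welfare hmono hsub hq hq1 hβ hpos hBNE hO0 hO1]

end Equilibrium

end ProportionalAllocation

theorem stmt_7_general (n m : ℕ) (V : Fin n → Type) [∀ i, Fintype (V i)]
    (val : ∀ i, V i → (Fin m → ℝ) → ℝ)
    (hmono : ∀ i (t : V i) (x x' : Fin m → ℝ), (∀ j, 0 ≤ x j ∧ x j ≤ 1) →
      (∀ j, 0 ≤ x' j ∧ x' j ≤ 1) → (∀ j, x j ≤ x' j) → val i t x ≤ val i t x')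
    (hsub : ∀ i (t : V i) (x y : Fin m → ℝ), (∀ j, 0 ≤ x j ∧ x j ≤ 1) →
      (∀ j, 0 ≤ y j ∧ y j ≤ 1) → (∀ j, 0 ≤ x j + y j ∧ x j + y j ≤ 1) →
      val i t (x + y) ≤ val i t x + val i t y)
    (q : ∀ i, V i → ℝ) (hq : ∀ i (t : V i), 0 ≤ q i t) (hq1 : ∀ i, ∑ t, q i t = 1)
    (β : ∀ i, V i → Fin m → ℝ) (hβ : ∀ i (t : V i) (j : Fin m), 0 ≤ β i t j)
    (hpos : ∀ t : (∀ i, V i), (0 < ∏ i, q i (t i)) →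
      ∀ i j, 0 < ∑ k ∈ Finset.univ.erase i, β k (t k) j)
    (hBNE : ∀ i (ti : V i) (b' : Fin m → ℝ), (∀ j, 0 ≤ b' j) →
      ∑ t : (∀ k, V k), (∏ k, q k (t k)) *
          propUtility (val i ti)
            (Function.update (fun k => β k (Function.update t i ti k)) i b') i
        ≤ ∑ t : (∀ k, V k), (∏ k, q k (t k)) *
            propUtility (val i ti) (fun k => β k (Function.update t i ti k)) i) :
    ∑ t : (∀ i, V i), (∏ i, q i (t i)) * ∑ i, val i (t i) (propAlloc (fun k => β k (t k)) i)
      ≥ (1 / 2) * ∑ t : (∀ i, V i), (∏ i, q i (t i)) *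
          sSup {w : ℝ | ∃ o : Fin n → Fin m → ℝ,
            (∀ i j, 0 ≤ o i j) ∧ (∀ j, ∑ i, o i j ≤ 1) ∧ w = ∑ i, val i (t i) (o i)} :=
  ProportionalAllocation.half_expectation_optimalWelfare_le
    (fun i t _ hx _ hx' hle => hmono i t _ _ hx hx' hle) hsub hq hq1 hβ hpos hBNE

/-- the Bayesian Price of Anarchy of the proportional allocation
mechanism with independent finite type spaces of monotone, normalized, subadditive
valuations is at most `2`: at any pure Bayesian Nash equilibrium `β`, the expected
social welfare is at least half of the expected optimal social welfare (the
supremum over feasible fractional allocations, for each type profile). -/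
theorem stmt_7 (n m : ℕ) (V : Fin n → Type) [∀ i, Fintype (V i)] [∀ i, Nonempty (V i)]
    (val : ∀ i, V i → (Fin m → ℝ) → ℝ)
    (hv0 : ∀ i (t : V i), val i t 0 = 0)
    (hvnn : ∀ i (t : V i) (x : Fin m → ℝ), (∀ j, 0 ≤ x j ∧ x j ≤ 1) → 0 ≤ val i t x)
    (hmono : ∀ i (t : V i) (x x' : Fin m → ℝ), (∀ j, 0 ≤ x j ∧ x j ≤ 1) →
      (∀ j, 0 ≤ x' j ∧ x' j ≤ 1) → (∀ j, x j ≤ x' j) → val i t x ≤ val i t x')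
    (hsub : ∀ i (t : V i) (x y : Fin m → ℝ), (∀ j, 0 ≤ x j ∧ x j ≤ 1) →
      (∀ j, 0 ≤ y j ∧ y j ≤ 1) → (∀ j, 0 ≤ x j + y j ∧ x j + y j ≤ 1) →
      val i t (x + y) ≤ val i t x + val i t y)
    (q : ∀ i, V i → ℝ) (hq : ∀ i (t : V i), 0 ≤ q i t) (hq1 : ∀ i, ∑ t, q i t = 1)
    (β : ∀ i, V i → Fin m → ℝ) (hβ : ∀ i (t : V i) (j : Fin m), 0 ≤ β i t j)
    (hpos : ∀ t : (∀ i, V i), (0 < ∏ i, q i (t i)) →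
      ∀ i j, 0 < ∑ k ∈ Finset.univ.erase i, β k (t k) j)
    (hBNE : ∀ i (ti : V i) (b' : Fin m → ℝ), (∀ j, 0 ≤ b' j) →
      ∑ t : (∀ k, V k), (∏ k, q k (t k)) *
          propUtility (val i ti)
            (Function.update (fun k => β k (Function.update t i ti k)) i b') i
        ≤ ∑ t : (∀ k, V k), (∏ k, q k (t k)) *
            propUtility (val i ti) (fun k => β k (Function.update t i ti k)) i) :
    ∑ t : (∀ i, V i), (∏ i, q i (t i)) * ∑ i, val i (t i) (propAlloc (fun k => β k (t k)) i)
      ≥ (1 / 2) * ∑ t : (∀ i, V i), (∏ i, q i (t i)) *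
          sSup {w : ℝ | ∃ o : Fin n → Fin m → ℝ,
            (∀ i j, 0 ≤ o i j) ∧ (∀ j, ∑ i, o i j ≤ 1) ∧ w = ∑ i, val i (t i) (o i)} :=
  stmt_7_general n m V val hmono hsub q hq hq1 β hβ hpos hBNE
end

section
/- For every m ≥ 1 there is a two-agent, m-resource instance of the proportional allocation mechanism with concave valuations whose Bayesian Price of Anarchy is at least √m/2. Concretely, set δ = 1/(√m + 1)² and β = √(δ/m) − δ ≥ 0. Agent 1 has the concave valuation v₁(x) = min_j x_j; agent 2's type is a resource j drawn uniformly from [m], and her valuation of type j is v₂^j(x) = x_j/√m (linear, hence concave). Let agent 1 bid β on every resource and let agent 2 of type j bid δ on resource j and 0 elsewhere. Then: (i) for every deviation b'₂ ∈ ℝ≥0^m of agent 2 of type j, her utility (1/√m)·b'₂j/(β + b'₂j)·(respecting which resources she bids on) minus Σ_{j'} b'₂_{j'} is at most her equilibrium utility; (ii) for every deviation b'₁ ∈ ℝ≥0^m of agent 1, (1/m)·Σ_j [b'₁j/(b'₁j + δ)] − Σ_j b'₁j ≤ δ, which equals agent 1's expected equilibrium utility, so the profile is a pure Bayesian Nash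 equilibrium; and (iii) the expected equilibrium social welfare equals 2/(√m + 1) < 2/√m, while allocating every resource entirely to agent 1 achieves social welfare 1; hence the ratio of optimal to equilibrium expected welfare is at least (√m + 1)/2 ≥ √m/2. -/
/-!
Bidding `x` against a competing bid `c` on a resource worth `a` yields `a·x/(c+x) − x`, a concave
function of `x` maximised where `(c + x)² = a·c`; its deficit from the maximum is `(x − x₀)²/(c + x)`.
Writing `s = √m`, the bids `δ = 1/(s+1)²` and `β = δ/s` satisfy this first-order condition both for
agent 2 (`a = 1/s`, `c = β`) and, resource by resource, for agent 1 (`a = 1/m`, `c = δ`), so the profile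
is an equilibrium. In it agent 1 gets the share `1/(s+1)` of the contested resource and agent 2 the
share `s/(s+1)`, whence the expected welfare `2/(s+1)`, against the welfare `1` of giving everything
to agent 1.
-/

open Finset

theorem mul_div_add_sub_le_of_mul_eq_sq {a c x x₀ : ℝ} (hx : 0 < c + x) (hx₀ : 0 < c + x₀)
    (h : a * c = (c + x₀) ^ 2) :
    a * (x / (c + x)) - x ≤ a * (x₀ / (c + x₀)) - x₀ := by
  have gap : a * (x₀ / (c + x₀)) - x₀ - (a * (x / (c + x)) - x) = (x - x₀) ^ 2 / (c + x) := by
    field_simp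
    linear_combination (x₀ - x) * h
  have : 0 ≤ (x - x₀) ^ 2 / (c + x) := by positivity
  linarith

theorem sqrt_div_sq_sub_eq {s : ℝ} (hs : 0 < s) :
    √(1 / (s + 1) ^ 2 / s ^ 2) - 1 / (s + 1) ^ 2 = 1 / (s + 1) ^ 2 / s := by
  rw [show 1 / (s + 1) ^ 2 / s ^ 2 = (1 / (s * (s + 1))) ^ 2 by field_simp,
    Real.sqrt_sq (by positivity)]
  field_simp
  ring

section Equilibrium

variable {s δ β : ℝ} (hs : 0 < s) (hδ : δ = 1 / (s + 1) ^ 2) (hβ : β = δ / s)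
include hs hδ hβ

theorem agent2_deviation_le {ι : Type*} [Fintype ι] (j : ι) (b' : ι → ℝ) (hb' : ∀ j', 0 ≤ b' j') :
    (1 / s) * (b' j / (β + b' j)) - ∑ j', b' j' ≤ (1 / s) * (δ / (β + δ)) - δ := by
  have hδ0 : 0 < δ := by rw [hδ]; positivity
  have hβ0 : 0 < β := by rw [hβ]; positivity
  have first_order : 1 / s * β = (β + δ) ^ 2 := by
    subst hβ hδ; field_simp; ring
  have := mul_div_add_sub_le_of_mul_eq_sq (x := b' j) (by linarith [hb' j]) (by linarith)
    first_order
  linarith [single_le_sum (fun i _ => hb' i) (mem_univ j)]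

theorem agent1_deviation_le {ι : Type*} [Fintype ι] (hcard : (Fintype.card ι : ℝ) = s ^ 2)
    (b' : ι → ℝ) (hb' : ∀ j, 0 ≤ b' j) :
    (1 / Fintype.card ι) * (∑ j, b' j / (b' j + δ)) - ∑ j, b' j ≤ δ := by
  have hδ0 : 0 < δ := by rw [hδ]; positivity
  have hβ0 : 0 < β := by rw [hβ]; positivity
  have first_order : 1 / s ^ 2 * δ = (δ + β) ^ 2 := by
    subst hβ hδ; field_simp
  have equilibrium_value : 1 / s ^ 2 * (β / (δ + β)) - β = δ / s ^ 2 := by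
    subst hβ hδ; field_simp; ring
  have per_resource (j : ι) : 1 / s ^ 2 * (b' j / (b' j + δ)) - b' j ≤ δ / s ^ 2 := by
    rw [add_comm, ← equilibrium_value]
    exact mul_div_add_sub_le_of_mul_eq_sq (by linarith [hb' j]) (by linarith) first_order
  calc (1 / Fintype.card ι) * (∑ j, b' j / (b' j + δ)) - ∑ j, b' j
      = ∑ j, (1 / s ^ 2 * (b' j / (b' j + δ)) - b' j) := by
        rw [hcard, sum_sub_distrib, mul_sum]
    _ ≤ ∑ _j : ι, δ / s ^ 2 := sum_le_sum fun j _ => per_resource j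
    _ = δ := by
        rw [sum_const, card_univ, nsmul_eq_mul, hcard]
        field_simp

theorem agent1_equilibrium_utility : β / (β + δ) - s ^ 2 * β = δ := by
  subst hβ hδ; field_simp; ring

theorem equilibrium_welfare : β / (β + δ) + (1 / s) * (δ / (β + δ)) = 2 / (s + 1) := by
  subst hβ hδ; field_simp; ring

end Equilibrium

/-- concave valuations can have Bayesian Price of Anarchy at least
`√m / 2`. With `δ = 1/(√m+1)²` and `β = √(δ/m) − δ ≥ 0`, in the two-agent instance
where agent 1 has valuation `min_j x_j`, agent 2's type is a uniformly random resource
`j` with valuation `x_j/√m`, agent 1 bids `β` on every resource and agent 2 of type `j`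
bids `δ` on resource `j` (and `0` elsewhere):
(i) no deviation of agent 2 of any type is profitable;
(ii) no deviation of agent 1 is profitable (its expected utility is at most `δ`, which
equals agent 1's expected equilibrium utility `β/(β+δ) − m·β`);
(iii) the expected equilibrium social welfare equals `2/(√m + 1) < 2/√m`, while the
optimal social welfare is `1` (all resources to agent 1), so the Price of Anarchy
ratio `1 / (2/(√m+1))` is at least `√m / 2`. -/
theorem stmt_8 (m : ℕ) (hm : 1 ≤ m) (δ β : ℝ)
    (hδ : δ = 1 / (Real.sqrt m + 1) ^ 2)
    (hβ : β = Real.sqrt (δ / m) - δ) :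
    0 ≤ β ∧
    -- (i) agent 2 of type j cannot profit by deviating
    (∀ (j : Fin m) (b' : Fin m → ℝ), (∀ j', 0 ≤ b' j') →
      (1 / Real.sqrt m) * (b' j / (β + b' j)) - ∑ j', b' j'
        ≤ (1 / Real.sqrt m) * (δ / (β + δ)) - δ) ∧
    -- (ii) agent 1 cannot profit by deviating
    (∀ b' : Fin m → ℝ, (∀ j, 0 ≤ b' j) →
      (1 / m) * (∑ j, b' j / (b' j + δ)) - ∑ j, b' j ≤ δ) ∧
    -- δ equals agent 1's expected equilibrium utility
    β / (β + δ) - m * β = δ ∧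
    -- (iii) expected equilibrium welfare vs. the optimum of 1
    β / (β + δ) + (1 / Real.sqrt m) * (δ / (β + δ)) = 2 / (Real.sqrt m + 1) ∧
    2 / (Real.sqrt m + 1) < 2 / Real.sqrt m ∧
    1 / (2 / (Real.sqrt m + 1)) ≥ Real.sqrt m / 2 := by
  have hm_sq : (m : ℝ) = √m ^ 2 := (Real.sq_sqrt m.cast_nonneg).symm
  set s := √m
  have hs : 0 < s := Real.sqrt_pos.mpr (by exact_mod_cast hm)
  have hβ' : β = δ / s := by rw [hβ, hδ, hm_sq, sqrt_div_sq_sub_eq hs]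
  have hcard : (Fintype.card (Fin m) : ℝ) = s ^ 2 := by rw [Fintype.card_fin, hm_sq]
  refine ⟨by rw [hβ', hδ]; positivity, fun j => agent2_deviation_le hs hδ hβ' j,
    fun b' hb' => ?_, hm_sq ▸ agent1_equilibrium_utility hs hδ hβ',
    equilibrium_welfare hs hδ hβ', by gcongr; linarith, by rw [one_div_div]; linarith⟩
  simpa using agent1_deviation_le hs hδ hβ' hcard b' hb'
end

section
/- Consider the proportional allocation mechanism in the polyhedral environment: A is a nonnegative m×n matrix with entries a_{ij} (row j for resource, column i for agent — here written a_{ij} for agent i and resource j), such that for each agent i there is at least one resource j with a_{ij} > 0; an allocation vector x ∈ ℝ≥0^n is feasible if A·x ≤ 1 componentwise. Each agent i has a monotone, normalized, subadditive valuation v_i : ℝ≥0 → ℝ≥0. Given nonnegative bids b_{ij}, agent i receives x_i(b) = min over {j : a_{ij} > 0} of b_{ij}/(a_{ij}·Σ_{k∈[n]} b_{kj}) and pays Σ_j b_{ij}; her utility is u_i(b) = v_i(x_i(b)) − Σ_j b_{ij}. Let b be a pure Nash equilibrium with Σ_{k≠i} b_{kj} > 0 for every agent i and resource j. Then for every feasible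 allocation o (o ≥ 0, A·o ≤ 1), Σ_i v_i(x_i(b)) ≥ (1/2)·Σ_i v_i(o_i); i.e., the pure Price of Anarchy in the polyhedral environment with subadditive agents is at most 2. -/
/-! Agent `i` deviates to the bids `a i j * o i * B i j`, where `B i j` is the total bid of the
others on resource `j`. Against these bids she receives `o i / (a i j * o i + 1) ≥ o i / 2` of
every resource (feasibility gives `a i j * o i ≤ 1`), so by the Nash condition and monotonicity
`v i (o i / 2) + Σ_j b i j - Σ_j (a i j * o i * B i j) ≤ v i (x b i)`. Summed over agents, the
deviation payments are at most `Σ_j (Σ_i a i j * o i) Σ_k b k j ≤ Σ_{i,j} b i j` by feasibility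
again, and subadditivity gives `v i (o i) ≤ 2 v i (o i / 2)`. -/

open Finset

lemma half_le_of_subadditive {v : ℝ → ℝ} {t : ℝ}
    (hsub : v (t / 2 + t / 2) ≤ v (t / 2) + v (t / 2)) : 1 / 2 * v t ≤ v (t / 2) := by
  rw [add_halves] at hsub
  linarith

lemma half_le_deviation_share {a o B : ℝ} (ha : 0 < a) (hB : 0 < B) (ho : 0 ≤ o)
    (hfeas : a * o ≤ 1) : o / 2 ≤ a * o * B / (a * (a * o * B + B)) := by
  have hshare : a * o * B / (a * (a * o * B + B)) = o / (a * o + 1) := by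
    rw [show a * o * B = (a * B) * o by ring,
      show a * ((a * B) * o + B) = (a * B) * (a * o + 1) by ring,
      mul_div_mul_left _ _ (by positivity)]
  rw [hshare]
  exact div_le_div_of_nonneg_left ho (by positivity) (by linarith)

section Polyhedral

variable {n m : ℕ}

lemma sum_update_apply (b : Fin n → Fin m → ℝ) (i : Fin n) (c : Fin m → ℝ) (j : Fin m) :
    ∑ k, Function.update b i c k j = c j + ∑ k ∈ univ.erase i, b k j := by
  rw [← add_sum_erase _ _ (mem_univ i), Function.update_self]
  congr 1
  exact sum_congr rfl fun k hk => by rw [Function.update_of_ne (ne_of_mem_erase hk)]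

lemma single_le_of_feasible {a : Fin n → Fin m → ℝ} {o : Fin n → ℝ}
    (ha : ∀ i j, 0 ≤ a i j) (ho : ∀ i, 0 ≤ o i) (hfeas : ∀ j, ∑ i, a i j * o i ≤ 1)
    (i : Fin n) (j : Fin m) : a i j * o i ≤ 1 :=
  (single_le_sum (f := fun k => a k j * o k) (fun k _ => mul_nonneg (ha k j) (ho k))
    (mem_univ i)).trans (hfeas j)

lemma sum_deviation_le_sum_bids {a : Fin n → Fin m → ℝ} {o : Fin n → ℝ}
    {b : Fin n → Fin m → ℝ} (ha : ∀ i j, 0 ≤ a i j) (ho : ∀ i, 0 ≤ o i)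
    (hfeas : ∀ j, ∑ i, a i j * o i ≤ 1) (hb : ∀ i j, 0 ≤ b i j) :
    ∑ i, ∑ j, a i j * o i * ∑ k ∈ univ.erase i, b k j ≤ ∑ i, ∑ j, b i j := by
  have hothers : ∀ i j, a i j * o i * ∑ k ∈ univ.erase i, b k j ≤ a i j * o i * ∑ k, b k j :=
    fun i j => mul_le_mul_of_nonneg_left
      (sum_le_sum_of_subset_of_nonneg (erase_subset _ _) fun k _ _ => hb k j)
      (mul_nonneg (ha i j) (ho i))
  calc ∑ i, ∑ j, a i j * o i * ∑ k ∈ univ.erase i, b k j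
      ≤ ∑ i, ∑ j, a i j * o i * ∑ k, b k j :=
        sum_le_sum fun i _ => sum_le_sum fun j _ => hothers i j
    _ = ∑ j, (∑ i, a i j * o i) * ∑ k, b k j := by
        rw [sum_comm]; simp only [sum_mul]
    _ ≤ ∑ j, 1 * ∑ k, b k j := sum_le_sum fun j _ =>
        mul_le_mul_of_nonneg_right (hfeas j) (sum_nonneg fun k _ => hb k j)
    _ = ∑ i, ∑ j, b i j := by rw [sum_comm]; simp only [one_mul]

end Polyhedral

theorem stmt_13_general (n m : ℕ) (a : Fin n → Fin m → ℝ)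
    (ha : ∀ i j, 0 ≤ a i j) (hactive : ∀ i, ∃ j, 0 < a i j)
    (v : Fin n → ℝ → ℝ)
    (hmono : ∀ i (x x' : ℝ), 0 ≤ x → x ≤ x' → v i x ≤ v i x')
    (hsub : ∀ i (x y : ℝ), 0 ≤ x → 0 ≤ y → v i (x + y) ≤ v i x + v i y)
    (x : (Fin n → Fin m → ℝ) → Fin n → ℝ)
    (hx : ∀ (b' : Fin n → Fin m → ℝ) (i : Fin n),
      x b' i = sInf {t : ℝ | ∃ j, 0 < a i j ∧ t = b' i j / (a i j * ∑ k, b' k j)})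
    (b : Fin n → Fin m → ℝ) (hb : ∀ i j, 0 ≤ b i j)
    (hpos : ∀ i j, 0 < ∑ k ∈ Finset.univ.erase i, b k j)
    (hNE : ∀ i (b' : Fin m → ℝ), (∀ j, 0 ≤ b' j) →
      v i (x (Function.update b i b') i) - ∑ j, b' j ≤ v i (x b i) - ∑ j, b i j)
    (o : Fin n → ℝ) (ho : ∀ i, 0 ≤ o i) (hfeas : ∀ j, ∑ i, a i j * o i ≤ 1) :
    ∑ i, v i (x b i) ≥ (1 / 2) * ∑ i, v i (o i) := by
  set c : Fin n → Fin m → ℝ := fun i j => a i j * o i * ∑ k ∈ univ.erase i, b k j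
  have hc : ∀ i j, 0 ≤ c i j := fun i j => mul_nonneg (mul_nonneg (ha i j) (ho i)) (hpos i j).le
  have hshare : ∀ i, o i / 2 ≤ x (Function.update b i (c i)) i := fun i => by
    obtain ⟨j₀, hj₀⟩ := hactive i
    rw [hx]
    refine le_csInf ⟨_, j₀, hj₀, rfl⟩ ?_
    rintro t ⟨j, hj, rfl⟩
    rw [sum_update_apply, Function.update_self]
    exact half_le_deviation_share hj (hpos i j) (ho i) (single_le_of_feasible ha ho hfeas i j)
  have hagent : ∀ i, 1 / 2 * v i (o i) + ∑ j, b i j - ∑ j, c i j ≤ v i (x b i) := fun i => by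
    have hho : 0 ≤ o i / 2 := by linarith [ho i]
    have hhalf := half_le_of_subadditive (hsub i _ _ hho hho)
    have hdev := hmono i _ _ hho (hshare i)
    linarith [hNE i (c i) (hc i)]
  have hpay := sum_deviation_le_sum_bids ha ho hfeas hb
  have htotal := sum_le_sum fun i (_ : i ∈ univ) => hagent i
  rw [sum_sub_distrib, sum_add_distrib, ← mul_sum] at htotal
  linarith

/-- in the polyhedral environment, the pure Price of Anarchy of the
proportional allocation mechanism with monotone, normalized, subadditive
single-parameter valuations is at most `2`. Here `a i j ≥ 0` is the constraint
matrix entry of agent `i` on resource `j` (each agent having at least one positive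
entry), the allocation of agent `i` under bids `b'` is
`x b' i = min_{j : a i j > 0} b' i j / (a i j · Σ_k b' k j)` (written via `sInf`),
and `o` ranges over feasible allocations (`o ≥ 0`, `A·o ≤ 1`). -/
theorem stmt_13 (n m : ℕ) (a : Fin n → Fin m → ℝ)
    (ha : ∀ i j, 0 ≤ a i j) (hactive : ∀ i, ∃ j, 0 < a i j)
    (v : Fin n → ℝ → ℝ)
    (hv0 : ∀ i, v i 0 = 0)
    (hvnn : ∀ i (x : ℝ), 0 ≤ x → 0 ≤ v i x)
    (hmono : ∀ i (x x' : ℝ), 0 ≤ x → x ≤ x' → v i x ≤ v i x')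
    (hsub : ∀ i (x y : ℝ), 0 ≤ x → 0 ≤ y → v i (x + y) ≤ v i x + v i y)
    (x : (Fin n → Fin m → ℝ) → Fin n → ℝ)
    (hx : ∀ (b' : Fin n → Fin m → ℝ) (i : Fin n),
      x b' i = sInf {t : ℝ | ∃ j, 0 < a i j ∧ t = b' i j / (a i j * ∑ k, b' k j)})
    (b : Fin n → Fin m → ℝ) (hb : ∀ i j, 0 ≤ b i j)
    (hpos : ∀ i j, 0 < ∑ k ∈ Finset.univ.erase i, b k j)
    (hNE : ∀ i (b' : Fin m → ℝ), (∀ j, 0 ≤ b' j) →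
      v i (x (Function.update b i b') i) - ∑ j, b' j ≤ v i (x b i) - ∑ j, b i j)
    (o : Fin n → ℝ) (ho : ∀ i, 0 ≤ o i) (hfeas : ∀ j, ∑ i, a i j * o i ≤ 1) :
    ∑ i, v i (x b i) ≥ (1 / 2) * ∑ i, v i (o i) :=
  stmt_13_general n m a ha hactive v hmono hsub x hx b hb hpos hNE o ho hfeas
end

section
/- For every ε ∈ (0,1), the pure Price of Anarchy of the proportional allocation mechanism is at least 2/(1 + ε), witnessed by the following two-agent, single-resource instance. Agent 1's valuation is v₁(0) = 0, v₁(x) = 1 + ε·x for 0 < x < 1, and v₁(1) = 2; agent 2's valuation is v₂(x) = ε·x. Both v₁ and v₂ are subadditive (and monotone, normalized) on [0,1]. The bid profile b₁ = b₂ = ε/4 is a pure Nash equilibrium: for every b ≥ 0, 1 + ε·b/(b + ε/4) − b ≤ u₁(ε/4, ε/4) and ε·b/(b + ε/4) − b ≤ u₂(ε/4, ε/4). The equilibrium social welfare is v₁(1/2) + v₂(1/2) = 1 + ε, whereas the optimal social welfare max{v₁(x₁) + v₂(x₂) : x₁, x₂ ≥ 0, x₁ + x₂ ≤ 1} equals 2.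 -/
/-!
Agent 1 gets value about `1` from any positive share, so beyond securing a positive share her
incentives are those of a bidder with linear valuation `ε·x`, like agent 2. Against an opponent
bid of `ε/4`, a bidder with valuation `ε·x` maximizes `ε·b/(b + ε/4) - b` at `b = ε/4`, so both
agents bidding `ε/4` is an equilibrium with welfare `1 + ε`. Giving the whole resource to agent 1
instead yields the jump `v₁ 1 = 2`.
-/

/-- The best response of a bidder with valuation `a·x` to an opponent bid of `a/4` is `a/4`. -/
lemma mul_div_add_quarter_sub_le {a b : ℝ} (ha : 0 < a) (hb : 0 ≤ b) :
    a * (b / (b + a / 4)) - b ≤ a / 4 := by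
  have hpos : 0 < b + a / 4 := by linarith
  rw [sub_le_iff_le_add, ← mul_div_assoc, div_le_iff₀ hpos]
  nlinarith [sq_nonneg (b - a / 4)]

lemma div_add_lt_one {b c : ℝ} (hb : 0 ≤ b) (hc : 0 < c) : b / (b + c) < 1 :=
  (div_lt_one (by linarith)).2 (by linarith)

namespace JumpValuation

variable {ε : ℝ} {v : ℝ → ℝ}

lemma apply_le_one_add_mul (hv0 : v 0 = 0)
    (hmid : ∀ x : ℝ, 0 < x → x < 1 → v x = 1 + ε * x) {x : ℝ} (hx0 : 0 ≤ x) (hx1 : x < 1) :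
    v x ≤ 1 + ε * x := by
  rcases hx0.eq_or_lt with rfl | hx0
  · simp [hv0]
  · exact (hmid x hx0 hx1).le

lemma one_add_mul_le_apply (hε1 : ε ≤ 1)
    (hmid : ∀ x : ℝ, 0 < x → x < 1 → v x = 1 + ε * x) (hv1 : v 1 = 2) {x : ℝ}
    (hx0 : 0 < x) (hx1 : x ≤ 1) : 1 + ε * x ≤ v x := by
  rcases hx1.eq_or_lt with rfl | hx1
  · linarith
  · exact (hmid x hx0 hx1).ge

lemma apply_le_two (hε0 : 0 ≤ ε) (hε1 : ε ≤ 1) (hv0 : v 0 = 0)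
    (hmid : ∀ x : ℝ, 0 < x → x < 1 → v x = 1 + ε * x) (hv1 : v 1 = 2) {x : ℝ}
    (hx0 : 0 ≤ x) (hx1 : x ≤ 1) : v x ≤ 2 := by
  rcases hx1.eq_or_lt with rfl | hx1
  · exact hv1.le
  · nlinarith [apply_le_one_add_mul hv0 hmid hx0 hx1]

lemma apply_le_apply_of_le (hε0 : 0 ≤ ε) (hε1 : ε ≤ 1) (hv0 : v 0 = 0)
    (hmid : ∀ x : ℝ, 0 < x → x < 1 → v x = 1 + ε * x) (hv1 : v 1 = 2) {x y : ℝ}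
    (hx : 0 ≤ x) (hxy : x ≤ y) (hy : y ≤ 1) : v x ≤ v y := by
  rcases hxy.eq_or_lt with rfl | hxy
  · rfl
  calc v x ≤ 1 + ε * x := apply_le_one_add_mul hv0 hmid hx (hxy.trans_le hy)
    _ ≤ 1 + ε * y := by nlinarith
    _ ≤ v y := one_add_mul_le_apply hε1 hmid hv1 (hx.trans_lt hxy) hy

/-- Any two positive shares are each worth at least `1`, which already covers `v ≤ 2`. -/
lemma apply_add_le_add_apply (hε0 : 0 ≤ ε) (hε1 : ε ≤ 1) (hv0 : v 0 = 0)
    (hmid : ∀ x : ℝ, 0 < x → x < 1 → v x = 1 + ε * x) (hv1 : v 1 = 2) {x y : ℝ}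
    (hx : 0 ≤ x) (hy : 0 ≤ y) (hxy : x + y ≤ 1) : v (x + y) ≤ v x + v y := by
  rcases hx.eq_or_lt with rfl | hx
  · simp [hv0]
  rcases hy.eq_or_lt with rfl | hy
  · simp [hv0]
  have one_le : ∀ z, 0 < z → z ≤ 1 → 1 ≤ v z := fun z hz0 hz1 => by
    nlinarith [one_add_mul_le_apply hε1 hmid hv1 hz0 hz1]
  linarith [apply_le_two hε0 hε1 hv0 hmid hv1 (by linarith) hxy,
    one_le x hx (by linarith), one_le y hy (by linarith)]

lemma apply_share_sub_le (hε0 : 0 < ε) (hv0 : v 0 = 0)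
    (hmid : ∀ x : ℝ, 0 < x → x < 1 → v x = 1 + ε * x) {b : ℝ} (hb : 0 ≤ b) :
    v (b / (b + ε / 4)) - b ≤ 1 + ε / 4 := by
  have hshare : v (b / (b + ε / 4)) ≤ 1 + ε * (b / (b + ε / 4)) :=
    apply_le_one_add_mul hv0 hmid (by positivity) (div_add_lt_one hb (by positivity))
  linarith [mul_div_add_quarter_sub_le hε0 hb]

lemma apply_add_mul_le_two (hε0 : 0 ≤ ε) (hε1 : ε < 1) (hv0 : v 0 = 0)
    (hmid : ∀ x : ℝ, 0 < x → x < 1 → v x = 1 + ε * x) (hv1 : v 1 = 2) {x₁ x₂ : ℝ}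
    (hx₁ : 0 ≤ x₁) (hx₂ : 0 ≤ x₂) (hsum : x₁ + x₂ ≤ 1) : v x₁ + ε * x₂ ≤ 2 := by
  rcases (show x₁ ≤ 1 by linarith).eq_or_lt with rfl | hx₁1
  · nlinarith
  · nlinarith [apply_le_one_add_mul hv0 hmid hx₁ hx₁1]

end JumpValuation

/-- a two-agent single-resource lower bound instance showing that the
pure Price of Anarchy of the proportional allocation mechanism is at least
`2/(1+ε)` for every `ε ∈ (0,1)`. Agent 1's valuation satisfies `v₁ 0 = 0`,
`v₁ x = 1 + ε·x` for `0 < x < 1`, `v₁ 1 = 2`; agent 2's valuation is `v₂ x = ε·x`.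
Both valuations are monotone, normalized and subadditive on `[0,1]`; the profile
`b₁ = b₂ = ε/4` is a pure Nash equilibrium (with the stated dominating bounds on
deviation utilities); the equilibrium social welfare is `v₁(1/2)+v₂(1/2) = 1+ε`,
while the optimal social welfare equals `2`; hence the welfare ratio is `2/(1+ε)`. -/
theorem stmt_14 (ε : ℝ) (hε0 : 0 < ε) (hε1 : ε < 1)
    (v₁ v₂ : ℝ → ℝ)
    (hv₁0 : v₁ 0 = 0) (hv₁mid : ∀ x : ℝ, 0 < x → x < 1 → v₁ x = 1 + ε * x)
    (hv₁1 : v₁ 1 = 2)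
    (hv₂ : ∀ x : ℝ, v₂ x = ε * x) :
    -- v₁ and v₂ are monotone on [0,1]
    (∀ x y : ℝ, 0 ≤ x → x ≤ y → y ≤ 1 → v₁ x ≤ v₁ y) ∧
    (∀ x y : ℝ, 0 ≤ x → x ≤ y → y ≤ 1 → v₂ x ≤ v₂ y) ∧
    -- v₁ and v₂ are subadditive on [0,1]
    (∀ x y : ℝ, 0 ≤ x → 0 ≤ y → x + y ≤ 1 → v₁ (x + y) ≤ v₁ x + v₁ y) ∧
    (∀ x y : ℝ, 0 ≤ x → 0 ≤ y → x + y ≤ 1 → v₂ (x + y) ≤ v₂ x + v₂ y) ∧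
    -- the stated deviation bounds
    (∀ b : ℝ, 0 ≤ b → 1 + ε * (b / (b + ε / 4)) - b ≤ v₁ (1 / 2) - ε / 4) ∧
    (∀ b : ℝ, 0 ≤ b → ε * (b / (b + ε / 4)) - b ≤ v₂ (1 / 2) - ε / 4) ∧
    -- (ε/4, ε/4) is a pure Nash equilibrium
    (∀ b : ℝ, 0 ≤ b → v₁ (b / (b + ε / 4)) - b ≤ v₁ (1 / 2) - ε / 4) ∧
    (∀ b : ℝ, 0 ≤ b → v₂ (b / (b + ε / 4)) - b ≤ v₂ (1 / 2) - ε / 4) ∧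
    -- equilibrium social welfare
    v₁ (1 / 2) + v₂ (1 / 2) = 1 + ε ∧
    -- optimal social welfare
    IsGreatest {w : ℝ | ∃ x₁ x₂ : ℝ, 0 ≤ x₁ ∧ 0 ≤ x₂ ∧ x₁ + x₂ ≤ 1 ∧
      w = v₁ x₁ + v₂ x₂} 2 ∧
    -- hence the Price of Anarchy of this instance is at least 2/(1+ε)
    2 / (v₁ (1 / 2) + v₂ (1 / 2)) = 2 / (1 + ε) := by
  have hhalf₁ : v₁ (1 / 2) = 1 + ε / 2 := by rw [hv₁mid _ (by norm_num) (by norm_num)]; ring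
  have hhalf₂ : v₂ (1 / 2) = ε / 2 := by rw [hv₂]; ring
  have hwelfare : v₁ (1 / 2) + v₂ (1 / 2) = 1 + ε := by rw [hhalf₁, hhalf₂]; ring
  have best_response := fun b (hb : 0 ≤ b) => mul_div_add_quarter_sub_le hε0 hb
  refine ⟨fun x y => JumpValuation.apply_le_apply_of_le hε0.le hε1.le hv₁0 hv₁mid hv₁1,
    fun x y _ hxy _ => by simp only [hv₂]; nlinarith,
    fun x y => JumpValuation.apply_add_le_add_apply hε0.le hε1.le hv₁0 hv₁mid hv₁1,
    fun x y _ _ _ => by simp only [hv₂]; linarith,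
    fun b hb => by linarith [best_response b hb],
    fun b hb => by linarith [best_response b hb],
    fun b hb => by linarith [JumpValuation.apply_share_sub_le hε0 hv₁0 hv₁mid hb],
    fun b hb => by simp only [hv₂] at *; linarith [best_response b hb],
    hwelfare, ⟨⟨1, 0, by norm_num, le_rfl, by norm_num, by rw [hv₁1, hv₂]; ring⟩, ?_⟩,
    by rw [hwelfare]⟩
  rintro w ⟨x₁, x₂, hx₁, hx₂, hsum, rfl⟩
  rw [hv₂]
  exact JumpValuation.apply_add_mul_le_two hε0.le hε1 hv₁0 hv₁mid hv₁1 hx₁ hx₂ hsum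
end
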